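/- arXiv:2506.13617 — 12 statements merged into one kernel-verified Lean document; each statement's English description precedes it below -/
import Mathlib

section
/- Let S and T be semigroups and A an (S,T)-biact. The following are equivalent: (1) A is left stable; (2) ≤_L ∩ J ⊆ L in A; (3) for every a ∈ A there exists c ∈ A with c J a such that every d ∈ A with d ≤_L c and d J c satisfies d L c (i.e. within each J-class, the poset of L-classes contained in it has a minimal element). -/
/-! Green's preorders and equivalences on an `(S,T)`-biact, given by the left
action `sm : S → A → A` and the right action `rm : A → T → A`. -/

section BiactDefs

variable {S T A : Type*}

/-- `a ≤_L b` iff `a = b` or `a = s · b` for some `s ∈ S`. -/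
def leLAct (sm : S → A → A) (a b : A) : Prop :=
  a = b ∨ ∃ s, a = sm s b

/-- `a ≤_R b` iff `a = b` or `a = b · t` for some `t ∈ T`. -/
def leRAct (rm : A → T → A) (a b : A) : Prop :=
  a = b ∨ ∃ t, a = rm b t

/-- `a ≤_J b` iff `a = b`, or `a = s · b`, or `a = b · t`, or `a = s · b · t`. -/
def leJAct (sm : S → A → A) (rm : A → T → A) (a b : A) : Prop :=
  a = b ∨ (∃ s, a = sm s b) ∨ (∃ t, a = rm b t) ∨ ∃ s t, a = rm (sm s b) t

/-- Green's relation `L` on a biact. -/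
def eqvLAct (sm : S → A → A) (a b : A) : Prop :=
  leLAct sm a b ∧ leLAct sm b a

/-- Green's relation `R` on a biact. -/
def eqvRAct (rm : A → T → A) (a b : A) : Prop :=
  leRAct rm a b ∧ leRAct rm b a

/-- Green's relation `J` on a biact. -/
def eqvJAct (sm : S → A → A) (rm : A → T → A) (a b : A) : Prop :=
  leJAct sm rm a b ∧ leJAct sm rm b a

/-- `(sm, rm)` constitutes an `(S,T)`-biact structure on `A`. -/
def IsBiact [Semigroup S] [Semigroup T] (sm : S → A → A) (rm : A → T → A) : Prop :=
  (∀ (s s' : S) (a : A), sm s (sm s' a) = sm (s * s') a) ∧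
  (∀ (a : A) (t t' : T), rm (rm a t) t' = rm a (t * t')) ∧
  (∀ (s : S) (a : A) (t : T), rm (sm s a) t = sm s (rm a t))

/-- The minimal condition `M_L`: every descending `≤_L`-chain eventually stabilises. -/
def MinLAct (sm : S → A → A) : Prop :=
  ∀ f : ℕ → A, (∀ n, leLAct sm (f (n + 1)) (f n)) →
    ∃ m, ∀ n ≥ m, eqvLAct sm (f m) (f n)

/-- The minimal condition `M_R`. -/
def MinRAct (rm : A → T → A) : Prop :=
  ∀ f : ℕ → A, (∀ n, leRAct rm (f (n + 1)) (f n)) →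
    ∃ m, ∀ n ≥ m, eqvRAct rm (f m) (f n)

/-- The minimal condition `M_J`. -/
def MinJAct (sm : S → A → A) (rm : A → T → A) : Prop :=
  ∀ f : ℕ → A, (∀ n, leJAct sm rm (f (n + 1)) (f n)) →
    ∃ m, ∀ n ≥ m, eqvJAct sm rm (f m) (f n)

/-- A biact is left stable if `(s · a) J a` implies `(s · a) L a`. -/
def LeftStableAct (sm : S → A → A) (rm : A → T → A) : Prop :=
  ∀ (a : A) (s : S), eqvJAct sm rm (sm s a) a → eqvLAct sm (sm s a) a

/-- A biact is right stable if `(a · t) J a` implies `(a · t) R a`. -/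
def RightStableAct (sm : S → A → A) (rm : A → T → A) : Prop :=
  ∀ (a : A) (t : T), eqvJAct sm rm (rm a t) a → eqvRAct rm (rm a t) a

/-- A biact is stable if it is left and right stable. -/
def StableAct (sm : S → A → A) (rm : A → T → A) : Prop :=
  LeftStableAct sm rm ∧ RightStableAct sm rm

/-- A biact is `L`-periodic if for all `s, a` there is `n ≥ 1` with `(sⁿ · a) L (sⁿ⁺¹ · a)`. -/
def LPeriodicAct (sm : S → A → A) : Prop :=
  ∀ (s : S) (a : A), ∃ n : ℕ, 1 ≤ n ∧ eqvLAct sm ((sm s)^[n] a) ((sm s)^[n + 1] a)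

/-- A biact is `R`-periodic if for all `t, a` there is `n ≥ 1` with `(a · tⁿ) R (a · tⁿ⁺¹)`. -/
def RPeriodicAct (rm : A → T → A) : Prop :=
  ∀ (t : T) (a : A), ∃ n : ℕ, 1 ≤ n ∧
    eqvRAct rm ((fun x => rm x t)^[n] a) ((fun x => rm x t)^[n + 1] a)

end BiactDefs

section LeftStableAux

variable {S T A : Type*} [Semigroup S] [Semigroup T]
variable {sm : S → A → A} {rm : A → T → A}

private lemma leL_trans' (h1 : ∀ (s s' : S) (a : A), sm s (sm s' a) = sm (s * s') a)
    {a b c : A} (hab : leLAct sm a b) (hbc : leLAct sm b c) : leLAct sm a c := by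
  rcases hab with rfl | ⟨s, rfl⟩
  · exact hbc
  · rcases hbc with rfl | ⟨s', rfl⟩
    · exact Or.inr ⟨s, rfl⟩
    · exact Or.inr ⟨s * s', h1 s s' c⟩

private lemma leJ_trans'
    (h1 : ∀ (s s' : S) (a : A), sm s (sm s' a) = sm (s * s') a)
    (h2 : ∀ (a : A) (t t' : T), rm (rm a t) t' = rm a (t * t'))
    (h3 : ∀ (s : S) (a : A) (t : T), rm (sm s a) t = sm s (rm a t))
    {a b c : A} (hab : leJAct sm rm a b) (hbc : leJAct sm rm b c) :
    leJAct sm rm a c := by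
  rcases hab with rfl | ⟨s, rfl⟩ | ⟨t, rfl⟩ | ⟨s, t, rfl⟩ <;>
    rcases hbc with rfl | ⟨s', rfl⟩ | ⟨t', rfl⟩ | ⟨s', t', rfl⟩
  · exact Or.inl rfl
  · exact Or.inr (Or.inl ⟨s', rfl⟩)
  · exact Or.inr (Or.inr (Or.inl ⟨t', rfl⟩))
  · exact Or.inr (Or.inr (Or.inr ⟨s', t', rfl⟩))
  · exact Or.inr (Or.inl ⟨s, rfl⟩)
  · exact Or.inr (Or.inl ⟨s * s', h1 s s' c⟩)
  · exact Or.inr (Or.inr (Or.inr ⟨s, t', (h3 s c t').symm⟩))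
  · exact Or.inr (Or.inr (Or.inr ⟨s * s', t', by rw [← h3, h1]⟩))
  · exact Or.inr (Or.inr (Or.inl ⟨t, rfl⟩))
  · exact Or.inr (Or.inr (Or.inr ⟨s', t, rfl⟩))
  · exact Or.inr (Or.inr (Or.inl ⟨t' * t, h2 c t' t⟩))
  · exact Or.inr (Or.inr (Or.inr ⟨s', t' * t, h2 _ t' t⟩))
  · exact Or.inr (Or.inr (Or.inr ⟨s, t, rfl⟩))
  · exact Or.inr (Or.inr (Or.inr ⟨s * s', t, by rw [h1]⟩))
  · exact Or.inr (Or.inr (Or.inr ⟨s, t' * t, by rw [← h3, h2]⟩))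
  · exact Or.inr (Or.inr (Or.inr ⟨s * s', t' * t, by rw [← h3, h1, h2]⟩))

end LeftStableAux

/-- Equivalent characterisations of left stability of a biact:
(1) left stable; (2) `≤_L ∩ J ⊆ L`; (3) each `J`-class contains a minimal `L`-class. -/
theorem leftStable_tfae {S T A : Type*} [Semigroup S] [Semigroup T]
    (sm : S → A → A) (rm : A → T → A) (hbi : IsBiact sm rm) :
    (LeftStableAct sm rm ↔
      ∀ a b : A, leLAct sm a b → eqvJAct sm rm a b → eqvLAct sm a b) ∧
    (LeftStableAct sm rm ↔
      ∀ a : A, ∃ c : A, eqvJAct sm rm c a ∧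
        ∀ d : A, leLAct sm d c → eqvJAct sm rm d c → eqvLAct sm d c) := by
  obtain ⟨h1, h2, h3⟩ := hbi
  have key : LeftStableAct sm rm ↔
      ∀ a b : A, leLAct sm a b → eqvJAct sm rm a b → eqvLAct sm a b := by
    constructor
    · intro hst a b hL hJ
      rcases hL with rfl | ⟨s, rfl⟩
      · exact ⟨Or.inl rfl, Or.inl rfl⟩
      · exact hst b s hJ
    · intro h a s hJ
      exact h (sm s a) a (Or.inr ⟨s, rfl⟩) hJ
  refine ⟨key, ?_, ?_⟩
  · intro hst a
    exact ⟨a, ⟨Or.inl rfl, Or.inl rfl⟩, fun d hdL hdJ => key.mp hst d a hdL hdJ⟩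
  · intro hmin b s hJ
    obtain ⟨c, hcb, hminc⟩ := hmin b
    rcases hcb.2 with heq | ⟨u, heq⟩ | ⟨t, heq⟩ | ⟨u, t, heq⟩
    · subst heq
      exact hminc (sm s b) (Or.inr ⟨s, rfl⟩) hJ
    · -- b = sm u c
      have hJbc : eqvJAct sm rm b c := ⟨hcb.2, hcb.1⟩
      have hLbc : eqvLAct sm b c := hminc b (Or.inr ⟨u, heq⟩) hJbc
      have hJsc : eqvJAct sm rm (sm s b) c :=
        ⟨leJ_trans' h1 h2 h3 hJ.1 hJbc.1, leJ_trans' h1 h2 h3 hJbc.2 hJ.2⟩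
      have hLsc : eqvLAct sm (sm s b) c :=
        hminc (sm s b) (Or.inr ⟨s * u, by rw [heq, h1]⟩) hJsc
      exact ⟨leL_trans' h1 hLsc.1 hLbc.2, leL_trans' h1 hLbc.1 hLsc.2⟩
    · -- b = rm c t
      have hsb : sm s b = rm (sm s c) t := by rw [heq, h3]
      have hJec : eqvJAct sm rm (sm s c) c := by
        refine ⟨Or.inr (Or.inl ⟨s, rfl⟩), ?_⟩
        exact leJ_trans' h1 h2 h3 (leJ_trans' h1 h2 h3 hcb.1 hJ.2)
          (Or.inr (Or.inr (Or.inl ⟨t, hsb⟩)))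
      have hLec : eqvLAct sm (sm s c) c := hminc (sm s c) (Or.inr ⟨s, rfl⟩) hJec
      rcases hLec.2 with hce | ⟨v, hce⟩
      · refine ⟨Or.inr ⟨s, rfl⟩, Or.inl ?_⟩
        calc b = rm c t := heq
          _ = rm (sm s c) t := by rw [← hce]
          _ = sm s b := hsb.symm
      · refine ⟨Or.inr ⟨s, rfl⟩, Or.inr ⟨v, ?_⟩⟩
        calc b = rm c t := heq
          _ = rm (sm v (sm s c)) t := by rw [← hce]
          _ = sm v (rm (sm s c) t) := by rw [h3]
          _ = sm v (sm s b) := by rw [hsb]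
    · -- b = rm (sm u c) t
      have hsb : sm s b = rm (sm (s * u) c) t := by rw [heq, ← h3, h1]
      have hJec : eqvJAct sm rm (sm (s * u) c) c := by
        refine ⟨Or.inr (Or.inl ⟨s * u, rfl⟩), ?_⟩
        exact leJ_trans' h1 h2 h3 (leJ_trans' h1 h2 h3 hcb.1 hJ.2)
          (Or.inr (Or.inr (Or.inl ⟨t, hsb⟩)))
      have hLec : eqvLAct sm (sm (s * u) c) c :=
        hminc (sm (s * u) c) (Or.inr ⟨s * u, rfl⟩) hJec
      rcases hLec.2 with hce | ⟨v, hce⟩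
      · refine ⟨Or.inr ⟨s, rfl⟩, Or.inr ⟨u, ?_⟩⟩
        calc b = rm (sm u c) t := heq
          _ = rm (sm u (sm (s * u) c)) t := by rw [← hce]
          _ = sm u (rm (sm (s * u) c) t) := by rw [h3]
          _ = sm u (sm s b) := by rw [hsb]
      · refine ⟨Or.inr ⟨s, rfl⟩, Or.inr ⟨u * v, ?_⟩⟩
        calc b = rm (sm u c) t := heq
          _ = rm (sm u (sm v (sm (s * u) c))) t := by rw [← hce]
          _ = rm (sm (u * v) (sm (s * u) c)) t := by rw [h1]
          _ = sm (u * v) (rm (sm (s * u) c) t) := by rw [h3]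
          _ = sm (u * v) (sm s b) := by rw [hsb]
end

section
/- Let S and T be semigroups and A an (S,T)-biact. If A satisfies M_L then A is L-periodic, and if A is L-periodic then A is left stable. -/
section AuxLemmas

variable {S T A : Type*}

theorem leLAct_trans' [Semigroup S] {sm : S → A → A}
    (h1 : ∀ (s s' : S) (a : A), sm s (sm s' a) = sm (s * s') a) {x y z : A}
    (hxy : leLAct sm x y) (hyz : leLAct sm y z) : leLAct sm x z := by
  rcases hxy with rfl | ⟨u, rfl⟩ <;> rcases hyz with rfl | ⟨v, rfl⟩
  · exact Or.inl rfl
  · exact Or.inr ⟨v, rfl⟩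
  · exact Or.inr ⟨u, rfl⟩
  · exact Or.inr ⟨u * v, h1 u v z⟩

theorem eqvLAct_trans' [Semigroup S] {sm : S → A → A}
    (h1 : ∀ (s s' : S) (a : A), sm s (sm s' a) = sm (s * s') a) {x y z : A}
    (hxy : eqvLAct sm x y) (hyz : eqvLAct sm y z) : eqvLAct sm x z :=
  ⟨leLAct_trans' h1 hxy.1 hyz.1, leLAct_trans' h1 hyz.2 hxy.2⟩

theorem sm_g_iter {sm : S → A → A} {rm : A → T → A}
    (h3 : ∀ (s : S) (a : A) (t : T), rm (sm s a) t = sm s (rm a t))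
    (w : S) (t : T) (j : ℕ) (x : A) :
    (fun y => rm y t)^[j] (sm w x) = sm w ((fun y => rm y t)^[j] x) := by
  induction j generalizing x with
  | zero => rfl
  | succ k ih =>
      rw [Function.iterate_succ_apply, Function.iterate_succ_apply]
      simp only [h3]
      exact ih (rm x t)

theorem sm_iter_g_iter {sm : S → A → A} {rm : A → T → A}
    (h3 : ∀ (s : S) (a : A) (t : T), rm (sm s a) t = sm s (rm a t))
    (w : S) (t : T) (i j : ℕ) (x : A) :
    (fun y => rm y t)^[j] ((sm w)^[i] x) = (sm w)^[i] ((fun y => rm y t)^[j] x) := by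
  induction i generalizing x with
  | zero => rfl
  | succ k ih =>
      rw [Function.iterate_succ_apply, Function.iterate_succ_apply, ih, sm_g_iter h3]

theorem core_unfold {sm : S → A → A} {rm : A → T → A}
    (h3 : ∀ (s : S) (a : A) (t : T), rm (sm s a) t = sm s (rm a t))
    {w : S} {t : T} {a : A} (ha : a = sm w (rm a t)) (k : ℕ) :
    a = (sm w)^[k] ((fun y => rm y t)^[k] a) := by
  induction k with
  | zero => rfl
  | succ k ih =>
      calc a = (sm w)^[k] ((fun y => rm y t)^[k] a) := ih
        _ = (sm w)^[k] ((fun y => rm y t)^[k] (sm w (rm a t))) := by rw [← ha]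
        _ = (sm w)^[k] (sm w ((fun y => rm y t)^[k] (rm a t))) := by
              rw [sm_g_iter h3]
        _ = (sm w)^[k + 1] ((fun y => rm y t)^[k + 1] a) := by
              rw [Function.iterate_succ_apply (sm w),
                Function.iterate_succ_apply (fun y => rm y t)]

theorem leLAct_g_iter {sm : S → A → A} {rm : A → T → A}
    (h3 : ∀ (s : S) (a : A) (t : T), rm (sm s a) t = sm s (rm a t))
    {t : T} (j : ℕ) {x y : A} (h : leLAct sm x y) :
    leLAct sm ((fun z => rm z t)^[j] x) ((fun z => rm z t)^[j] y) := by
  rcases h with rfl | ⟨u, rfl⟩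
  · exact Or.inl rfl
  · exact Or.inr ⟨u, sm_g_iter h3 u t j y⟩

/-- Core lemma: if `a = w·(a·t)` and the act is `L`-periodic, then `a ≤_L w·a`. -/
theorem core_lemma {sm : S → A → A} {rm : A → T → A}
    (h3 : ∀ (s : S) (a : A) (t : T), rm (sm s a) t = sm s (rm a t))
    (hper : LPeriodicAct sm) (w : S) (t : T) (a : A)
    (ha : a = sm w (rm a t)) : leLAct sm a (sm w a) := by
  obtain ⟨n, hn1, hL⟩ := hper w (rm a t)
  obtain ⟨k, rfl⟩ : ∃ k, n = k + 1 := ⟨n - 1, (Nat.succ_pred_eq_of_pos hn1).symm⟩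
  have e1 : (sm w)^[k + 1] (rm a t) = (sm w)^[k] a := by
    rw [Function.iterate_succ_apply, ← ha]
  have e2 : (sm w)^[k + 1 + 1] (rm a t) = (sm w)^[k + 1] a := by
    rw [Function.iterate_succ_apply, ← ha]
  rw [e1, e2] at hL
  have hle := leLAct_g_iter (rm := rm) (t := t) h3 k hL.1
  have c1 : (fun z => rm z t)^[k] ((sm w)^[k] a) = a := by
    rw [sm_iter_g_iter h3, ← core_unfold h3 ha k]
  have c2 : (fun z => rm z t)^[k] ((sm w)^[k + 1] a) = sm w a := by
    rw [sm_iter_g_iter h3, Function.iterate_succ_apply' (sm w),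
      ← core_unfold h3 ha k]
  rwa [c1, c2] at hle

end AuxLemmas

theorem main_helper {S T A : Type*} [Semigroup S] [Semigroup T]
    (sm : S → A → A) (rm : A → T → A) (hbi : IsBiact sm rm) :
    (MinLAct sm → LPeriodicAct sm) ∧ (LPeriodicAct sm → LeftStableAct sm rm) := by
  obtain ⟨h1, h2, h3⟩ := hbi
  constructor
  · intro hmin s a
    obtain ⟨m, hm⟩ := hmin (fun n => (sm s)^[n] a) (fun n =>
      Or.inr ⟨s, Function.iterate_succ_apply' (sm s) n a⟩)
    refine ⟨m + 1, Nat.succ_le_succ (Nat.zero_le m), ?_⟩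
    have ha := hm (m + 1) (Nat.le_succ m)
    have hb := hm (m + 1 + 1) (Nat.le_succ_of_le (Nat.le_succ m))
    exact eqvLAct_trans' h1 ⟨ha.2, ha.1⟩ hb
  · intro hper a s hJ
    refine ⟨Or.inr ⟨s, rfl⟩, ?_⟩
    rcases hJ.2 with h | ⟨s', h⟩ | ⟨t, h⟩ | ⟨s', t, h⟩
    · exact Or.inl h
    · exact Or.inr ⟨s', h⟩
    · rw [h3] at h
      exact core_lemma h3 hper s t a h
    · rw [h3, h3, h1] at h
      have := core_lemma h3 hper (s' * s) t a h
      exact leLAct_trans' h1 this (Or.inr ⟨s', (h1 s' s a).symm⟩)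

/-- If a biact satisfies `M_L` then it is `L`-periodic, and if it is
`L`-periodic then it is left stable. -/
theorem minL_imp_lPeriodic_imp_leftStable {S T A : Type*} [Semigroup S] [Semigroup T]
    (sm : S → A → A) (rm : A → T → A) (hbi : IsBiact sm rm) :
    (MinLAct sm → LPeriodicAct sm) ∧ (LPeriodicAct sm → LeftStableAct sm rm) := by
  exact main_helper sm rm hbi
end

section
/- Let S and T be semigroups and A an (S,T)-biact. If S is an L-periodic semigroup, then A is left stable. Moreover, if S is L-periodic and T is R-periodic, then A is stable. -/
/-- A semigroup `S` is `L`-periodic if for all `s, a ∈ S` there is `n ≥ 1`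
with `(sⁿ * a) L (sⁿ⁺¹ * a)`. -/
def LPeriodicSgp (S : Type*) [Semigroup S] : Prop :=
  ∀ s a : S, ∃ n : ℕ, 1 ≤ n ∧
    eqvLAct (fun (x y : S) => x * y) ((fun x => s * x)^[n] a) ((fun x => s * x)^[n + 1] a)

/-- A semigroup `T` is `R`-periodic if for all `t, a ∈ T` there is `n ≥ 1`
with `(a * tⁿ) R (a * tⁿ⁺¹)`. -/
def RPeriodicSgp (T : Type*) [Semigroup T] : Prop :=
  ∀ t a : T, ∃ n : ℕ, 1 ≤ n ∧
    eqvRAct (fun (x y : T) => x * y) ((fun x => x * t)^[n] a) ((fun x => x * t)^[n + 1] a)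

/-- If `S` is an `L`-periodic semigroup then every `(S,T)`-biact is left stable;
if moreover `T` is `R`-periodic then every `(S,T)`-biact is stable. -/
theorem lPeriodic_semigroup_imp_stable_biact {S T A : Type*} [Semigroup S] [Semigroup T]
    (sm : S → A → A) (rm : A → T → A) (hbi : IsBiact sm rm) :
    (LPeriodicSgp S → LeftStableAct sm rm) ∧
    (LPeriodicSgp S → RPeriodicSgp T → StableAct sm rm) := by
  obtain ⟨hA, hB, hC⟩ := hbi
  -- Key left lemma: if `a = s · (a · t)` then `a ≤_L s · a`.
  have keyL : LPeriodicSgp S → ∀ (u : S) (t : T) (a : A), a = sm u (rm a t) →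
      (a = sm u a ∨ ∃ v, a = sm v (sm u a)) := by
    intro hL u t a ha
    have chain : ∀ k, ∃ x, a = sm ((fun x => u * x)^[k] u) x := by
      intro k
      induction k with
      | zero => exact ⟨rm a t, ha⟩
      | succ k ih =>
        obtain ⟨x, hx⟩ := ih
        refine ⟨rm x t, ?_⟩
        rw [Function.iterate_succ_apply', ← hA, ← hC, ← hx]
        exact ha
    obtain ⟨n, hn, hLp⟩ := hL u u
    obtain ⟨x, hx⟩ := chain n
    have hq : (fun x => u * x)^[n + 1] u = u * (fun x => u * x)^[n] u :=
      Function.iterate_succ_apply' _ _ _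
    rcases hLp.1 with h | ⟨v, hv⟩
    · left
      calc a = sm ((fun x => u * x)^[n] u) x := hx
        _ = sm (u * (fun x => u * x)^[n] u) x := by rw [← hq, ← h]
        _ = sm u (sm ((fun x => u * x)^[n] u) x) := (hA u _ x).symm
        _ = sm u a := by rw [← hx]
    · right
      have hv' : (fun x => u * x)^[n] u = v * (u * (fun x => u * x)^[n] u) := by
        rw [← hq]; exact hv
      refine ⟨v, ?_⟩
      calc a = sm ((fun x => u * x)^[n] u) x := hx
        _ = sm (v * (u * (fun x => u * x)^[n] u)) x := by rw [← hv']
        _ = sm v (sm (u * (fun x => u * x)^[n] u) x) := (hA v _ x).symm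
        _ = sm v (sm u (sm ((fun x => u * x)^[n] u) x)) := by rw [hA u]
        _ = sm v (sm u a) := by rw [← hx]
  -- Key right lemma: if `a = (s · a) · t` then `a ≤_R a · t`.
  have keyR : RPeriodicSgp T → ∀ (t : T) (s : S) (a : A), a = rm (sm s a) t →
      (a = rm a t ∨ ∃ w, a = rm (rm a t) w) := by
    intro hR t s a ha
    have chain : ∀ k, ∃ y, a = rm y ((fun x => x * t)^[k] t) := by
      intro k
      induction k with
      | zero => exact ⟨sm s a, ha⟩
      | succ k ih =>
        obtain ⟨y, hy⟩ := ih
        refine ⟨sm s y, ?_⟩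
        rw [Function.iterate_succ_apply', ← hB, hC, ← hy]
        exact ha
    obtain ⟨n, hn, hRp⟩ := hR t t
    obtain ⟨y, hy⟩ := chain n
    have hq : (fun x => x * t)^[n + 1] t = ((fun x => x * t)^[n] t) * t :=
      Function.iterate_succ_apply' _ _ _
    rcases hRp.1 with h | ⟨w, hw⟩
    · left
      calc a = rm y ((fun x => x * t)^[n] t) := hy
        _ = rm y (((fun x => x * t)^[n] t) * t) := by rw [← hq, ← h]
        _ = rm (rm y ((fun x => x * t)^[n] t)) t := (hB y _ t).symm
        _ = rm a t := by rw [← hy]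
    · right
      have hw' : (fun x => x * t)^[n] t = (((fun x => x * t)^[n] t) * t) * w := by
        rw [← hq]; exact hw
      refine ⟨w, ?_⟩
      calc a = rm y ((fun x => x * t)^[n] t) := hy
        _ = rm y ((((fun x => x * t)^[n] t) * t) * w) := by rw [← hw']
        _ = rm (rm (rm y ((fun x => x * t)^[n] t)) t) w := by rw [hB, hB, mul_assoc]
        _ = rm (rm a t) w := by rw [← hy]
  have left : LPeriodicSgp S → LeftStableAct sm rm := by
    intro hL a s hJ
    refine ⟨Or.inr ⟨s, rfl⟩, ?_⟩
    rcases hJ.2 with h | ⟨s', h⟩ | ⟨t, h⟩ | ⟨s', t, h⟩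
    · exact Or.inl h
    · exact Or.inr ⟨s', h⟩
    · rcases keyL hL s t a (by rw [hC] at h; exact h) with h1 | ⟨v, h1⟩
      · exact Or.inl h1
      · exact Or.inr ⟨v, h1⟩
    · have h2 : a = sm (s' * s) (rm a t) := by
        rw [← hC, ← hA]; exact h
      rcases keyL hL (s' * s) t a h2 with h1 | ⟨v, h1⟩
      · exact Or.inr ⟨s', by rw [hA]; exact h1⟩
      · refine Or.inr ⟨v * s', ?_⟩
        rw [hA] at h1 ⊢
        rwa [mul_assoc]
  have right : RPeriodicSgp T → RightStableAct sm rm := by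
    intro hR a t hJ
    refine ⟨Or.inr ⟨t, rfl⟩, ?_⟩
    rcases hJ.2 with h | ⟨s, h⟩ | ⟨t', h⟩ | ⟨s, t', h⟩
    · exact Or.inl h
    · rcases keyR hR t s a (by rw [hC]; exact h) with h1 | ⟨w, h1⟩
      · exact Or.inl h1
      · exact Or.inr ⟨w, h1⟩
    · exact Or.inr ⟨t', h⟩
    · have h2 : a = rm (sm s a) (t * t') := by
        rw [← hB, hC]; exact h
      rcases keyR hR (t * t') s a h2 with h1 | ⟨w, h1⟩
      · exact Or.inr ⟨t', by rw [hB]; exact h1⟩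
      · refine Or.inr ⟨t' * w, ?_⟩
        rw [hB, ← mul_assoc, ← hB]
        exact h1
  exact ⟨fun hL => left hL, fun hL hR => ⟨left hL, right hR⟩⟩
end

section
/- Let S and T be semigroups, and let A be an (S,T)-biact that satisfies M_J. Then A satisfies M_L if and only if A is left stable. -/
/-- A biact satisfying `M_J` satisfies `M_L` if and only if it is left stable. -/
theorem minJ_minL_iff_leftStable {S T A : Type*} [Semigroup S] [Semigroup T]
    (sm : S → A → A) (rm : A → T → A) (hbi : IsBiact sm rm)
    (hJ : MinJAct sm rm) :
    MinLAct sm ↔ LeftStableAct sm rm := by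
  obtain ⟨hss, htt, hst⟩ := hbi
  constructor
  · intro hML a s hJeq
    have key : ∀ (b : S) (t : T), a = rm (sm b a) t → leLAct sm a (sm b a) := by
      intro b t hab
      set f : ℕ → A := fun n => (sm b)^[n] a with hf
      have hstep : ∀ n, f (n + 1) = sm b (f n) := by
        intro n; simp [hf, Function.iterate_succ_apply']
      have hdesc : ∀ n, leLAct sm (f (n + 1)) (f n) := fun n => Or.inr ⟨b, hstep n⟩
      obtain ⟨m, hm⟩ := hML f hdesc
      have htrace : ∀ n, 1 ≤ n → ∃ t', a = rm (f n) t' := by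
        intro n hn
        induction n with
        | zero => omega
        | succ k ih =>
          rcases Nat.eq_zero_or_pos k with hk0 | hk1
          · subst hk0
            refine ⟨t, ?_⟩
            have : f 1 = sm b a := by simp [hf]
            rw [this]; exact hab
          · obtain ⟨t', ht'⟩ := ih hk1
            refine ⟨t' * t, ?_⟩
            calc a = rm (sm b a) t := hab
              _ = rm (sm b (rm (f k) t')) t := by rw [← ht']
              _ = rm (rm (sm b (f k)) t') t := (congrArg (fun x => rm x t) (hst b (f k) t')).symm
              _ = rm (f (k + 1)) (t' * t) := by rw [htt, hstep]
      rcases Nat.eq_zero_or_pos m with hm0 | hm1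
      · subst hm0
        have h01 : leLAct sm (f 0) (f 1) := (hm 1 (by omega)).1
        have e0 : f 0 = a := by simp [hf]
        have e1 : f 1 = sm b a := by simp [hf]
        rw [e0, e1] at h01
        exact h01
      · obtain ⟨t', ht'⟩ := htrace m hm1
        rcases (hm (m + 1) (by omega)).1 with heq | ⟨u, hu⟩
        · left
          calc a = rm (f m) t' := ht'
            _ = rm (sm b (f m)) t' := by rw [← hstep, ← heq]
            _ = sm b (rm (f m) t') := hst b _ t'
            _ = sm b a := by rw [← ht']
        · right
          refine ⟨u, ?_⟩
          calc a = rm (f m) t' := ht'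
            _ = rm (sm u (f (m + 1))) t' := by rw [← hu]
            _ = sm u (rm (f (m + 1)) t') := hst u _ t'
            _ = sm u (rm (sm b (f m)) t') := by rw [hstep]
            _ = sm u (sm b (rm (f m) t')) := by rw [hst]
            _ = sm u (sm b a) := by rw [← ht']
    have h2 : leLAct sm (sm s a) a := Or.inr ⟨s, rfl⟩
    have h1 : leLAct sm a (sm s a) := by
      rcases hJeq.2 with heq | ⟨s', hs'⟩ | ⟨t, ht⟩ | ⟨s', t, hst'⟩
      · exact Or.inl heq
      · exact Or.inr ⟨s', hs'⟩
      · exact key s t ht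
      · have hab : a = rm (sm (s' * s) a) t := by rw [← hss]; exact hst'
        rcases key (s' * s) t hab with heq | ⟨u, hu⟩
        · exact Or.inr ⟨s', by rw [hss]; exact heq⟩
        · refine Or.inr ⟨u * s', ?_⟩
          rw [hss, mul_assoc]
          rw [hss] at hu
          exact hu
    exact ⟨h2, h1⟩
  · intro hLS f hdesc
    have hdescJ : ∀ n, leJAct sm rm (f (n + 1)) (f n) := by
      intro n
      rcases hdesc n with h | ⟨s, hs⟩
      · exact Or.inl h
      · exact Or.inr (Or.inl ⟨s, hs⟩)
    obtain ⟨m, hm⟩ := hJ f hdescJ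
    refine ⟨m, fun n hn => ?_⟩
    have hchain : ∀ k, leLAct sm (f (m + k)) (f m) := by
      intro k
      induction k with
      | zero => exact Or.inl rfl
      | succ j ih =>
        rcases ih with h | ⟨s, hs⟩
        · have h' := hdesc (m + j)
          rw [h] at h'
          exact h'
        · rcases hdesc (m + j) with h' | ⟨s', hs'⟩
          · exact Or.inr ⟨s, by show f (m + j + 1) = sm s (f m); rw [h', hs]⟩
          · exact Or.inr ⟨s' * s, by show f (m + j + 1) = sm (s' * s) (f m); rw [hs', hs, hss]⟩
    obtain ⟨k, rfl⟩ := Nat.exists_eq_add_of_le hn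
    rcases hchain k with heq | ⟨s, hs⟩
    · exact ⟨Or.inl heq.symm, Or.inl heq⟩
    · have hJeq : eqvJAct sm rm (sm s (f m)) (f m) := by
        rw [← hs]; exact ⟨(hm (m + k) hn).2, (hm (m + k) hn).1⟩
      have hl := hLS (f m) s hJeq
      rw [← hs] at hl
      exact ⟨hl.2, hl.1⟩
end

section
/- Let S and T be semigroups. For an (S,T)-biact A, the following are equivalent: (1) A satisfies M_L and M_R; (2) A satisfies M_J and is both L-periodic and R-periodic; (3) A is stable and satisfies M_J. -/
namespace BiactAux

variable {S T A : Type*}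

/-- Left action extended to `Option S` (adjoined identity). -/
def sm1 (sm : S → A → A) : Option S → A → A
  | none, a => a
  | some s, a => sm s a

/-- Right action extended to `Option T`. -/
def rm1 (rm : A → T → A) : A → Option T → A
  | a, none => a
  | a, some t => rm a t

/-- Multiplication on `Option S` (adjoined identity). -/
def omul {S : Type*} [Mul S] : Option S → Option S → Option S
  | none, y => y
  | some s, none => some s
  | some s, some s' => some (s * s')

section

variable [Semigroup S] [Semigroup T] {sm : S → A → A} {rm : A → T → A}

set_option linter.unusedSectionVars false

@[simp] lemma sm1_none (a : A) : sm1 sm none a = a := rfl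
@[simp] lemma sm1_some (s : S) (a : A) : sm1 sm (some s) a = sm s a := rfl
@[simp] lemma rm1_none (a : A) : rm1 rm a none = a := rfl
@[simp] lemma rm1_some (t : T) (a : A) : rm1 rm a (some t) = rm a t := rfl


variable (hbi : IsBiact sm rm)
include hbi

lemma sm1_omul (x y : Option S) (a : A) :
    sm1 sm (omul x y) a = sm1 sm x (sm1 sm y a) := by
  cases x <;> cases y <;> simp [omul, hbi.1]

lemma rm1_omul (a : A) (x y : Option T) :
    rm1 rm (rm1 rm a x) y = rm1 rm a (omul x y) := by
  cases x <;> cases y <;> simp [omul, hbi.2.1]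

lemma sr_comm (x : Option S) (a : A) (y : Option T) :
    rm1 rm (sm1 sm x a) y = sm1 sm x (rm1 rm a y) := by
  cases x <;> cases y <;> simp [hbi.2.2]

lemma sr_comm_s (s : S) (a : A) (y : Option T) :
    rm1 rm (sm s a) y = sm s (rm1 rm a y) := by
  cases y
  · rfl
  · exact hbi.2.2 _ _ _

lemma rs_comm_t (x : Option S) (a : A) (t : T) :
    rm (sm1 sm x a) t = sm1 sm x (rm a t) := by
  cases x
  · rfl
  · exact hbi.2.2 _ _ _

omit hbi in
lemma leL_iff {a b : A} : leLAct sm a b ↔ ∃ x, a = sm1 sm x b := by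
  constructor
  · rintro (rfl | ⟨s, rfl⟩)
    · exact ⟨none, rfl⟩
    · exact ⟨some s, rfl⟩
  · rintro ⟨x, rfl⟩
    cases x
    · exact Or.inl rfl
    · exact Or.inr ⟨_, rfl⟩

omit hbi in
lemma leR_iff {a b : A} : leRAct rm a b ↔ ∃ y, a = rm1 rm b y := by
  constructor
  · rintro (rfl | ⟨t, rfl⟩)
    · exact ⟨none, rfl⟩
    · exact ⟨some t, rfl⟩
  · rintro ⟨y, rfl⟩
    cases y
    · exact Or.inl rfl
    · exact Or.inr ⟨_, rfl⟩

omit hbi in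
lemma leJ_iff {a b : A} : leJAct sm rm a b ↔ ∃ x y, a = rm1 rm (sm1 sm x b) y := by
  constructor
  · rintro (rfl | ⟨s, rfl⟩ | ⟨t, rfl⟩ | ⟨s, t, rfl⟩)
    · exact ⟨none, none, rfl⟩
    · exact ⟨some s, none, rfl⟩
    · exact ⟨none, some t, rfl⟩
    · exact ⟨some s, some t, rfl⟩
  · rintro ⟨x, y, rfl⟩
    cases x <;> cases y
    · exact Or.inl rfl
    · exact Or.inr (Or.inr (Or.inl ⟨_, rfl⟩))
    · exact Or.inr (Or.inl ⟨_, rfl⟩)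
    · exact Or.inr (Or.inr (Or.inr ⟨_, _, rfl⟩))

omit hbi in
lemma leL_refl (a : A) : leLAct sm a a := Or.inl rfl

lemma leL_trans {a b c : A} (h1 : leLAct sm a b) (h2 : leLAct sm b c) :
    leLAct sm a c := by
  obtain ⟨x, rfl⟩ := leL_iff.mp h1
  obtain ⟨y, rfl⟩ := leL_iff.mp h2
  exact leL_iff.mpr ⟨omul x y, (sm1_omul hbi x y c).symm⟩

omit hbi in
lemma leR_refl (a : A) : leRAct rm a a := Or.inl rfl

lemma leR_trans {a b c : A} (h1 : leRAct rm a b) (h2 : leRAct rm b c) :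
    leRAct rm a c := by
  obtain ⟨x, rfl⟩ := leR_iff.mp h1
  obtain ⟨y, rfl⟩ := leR_iff.mp h2
  exact leR_iff.mpr ⟨omul y x, (rm1_omul hbi c y x)⟩

lemma leJ_trans {a b c : A} (h1 : leJAct sm rm a b) (h2 : leJAct sm rm b c) :
    leJAct sm rm a c := by
  obtain ⟨x, y, rfl⟩ := leJ_iff.mp h1
  obtain ⟨p, q, rfl⟩ := leJ_iff.mp h2
  refine leJ_iff.mpr ⟨omul x p, omul q y, ?_⟩
  rw [sm1_omul hbi, ← rm1_omul hbi, ← sr_comm hbi x]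

omit hbi in
lemma leL_leJ {a b : A} (h : leLAct sm a b) : leJAct sm rm a b := by
  rcases h with rfl | ⟨s, rfl⟩
  · exact Or.inl rfl
  · exact Or.inr (Or.inl ⟨s, rfl⟩)

omit hbi in
lemma leR_leJ {a b : A} (h : leRAct rm a b) : leJAct sm rm a b := by
  rcases h with rfl | ⟨t, rfl⟩
  · exact Or.inl rfl
  · exact Or.inr (Or.inr (Or.inl ⟨t, rfl⟩))

omit hbi in
lemma eqvL_symm {a b : A} (h : eqvLAct sm a b) : eqvLAct sm b a := ⟨h.2, h.1⟩

lemma eqvL_trans {a b c : A} (h1 : eqvLAct sm a b) (h2 : eqvLAct sm b c) :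
    eqvLAct sm a c := ⟨leL_trans hbi h1.1 h2.1, leL_trans hbi h2.2 h1.2⟩

omit hbi in
lemma eqvR_symm {a b : A} (h : eqvRAct rm a b) : eqvRAct rm b a := ⟨h.2, h.1⟩

lemma eqvR_trans {a b c : A} (h1 : eqvRAct rm a b) (h2 : eqvRAct rm b c) :
    eqvRAct rm a c := ⟨leR_trans hbi h1.1 h2.1, leR_trans hbi h2.2 h1.2⟩

omit hbi in
lemma eqvJ_symm {a b : A} (h : eqvJAct sm rm a b) : eqvJAct sm rm b a := ⟨h.2, h.1⟩

/-- Descending `≤_L` chains: later terms are below earlier ones. -/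
lemma chain_leL {f : ℕ → A} (hf : ∀ n, leLAct sm (f (n + 1)) (f n)) {m n : ℕ}
    (h : m ≤ n) : leLAct sm (f n) (f m) := by
  induction n, h using Nat.le_induction with
  | base => exact Or.inl rfl
  | succ n hmn ih => exact leL_trans hbi (hf n) ih

lemma chain_leR {f : ℕ → A} (hf : ∀ n, leRAct rm (f (n + 1)) (f n)) {m n : ℕ}
    (h : m ≤ n) : leRAct rm (f n) (f m) := by
  induction n, h using Nat.le_induction with
  | base => exact Or.inl rfl
  | succ n hmn ih => exact leR_trans hbi (hf n) ih

lemma chain_leJ {f : ℕ → A} (hf : ∀ n, leJAct sm rm (f (n + 1)) (f n)) {m n : ℕ}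
    (h : m ≤ n) : leJAct sm rm (f n) (f m) := by
  induction n, h using Nat.le_induction with
  | base => exact Or.inl rfl
  | succ n hmn ih => exact leJ_trans hbi (hf n) ih

/-- `M_L` implies `L`-periodicity. -/
lemma minL_lper (hL : MinLAct sm) : LPeriodicAct sm := by
  intro s a
  have hchain : ∀ n, leLAct sm ((sm s)^[n + 1] a) ((sm s)^[n] a) := by
    intro n
    rw [Function.iterate_succ_apply']
    exact Or.inr ⟨s, rfl⟩
  obtain ⟨m, hm⟩ := hL (fun n => (sm s)^[n] a) hchain
  refine ⟨max 1 m, le_max_left _ _, ?_⟩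
  have h1 := hm (max 1 m) (le_max_right _ _)
  have h2 := hm (max 1 m + 1) (le_trans (le_max_right _ _) (Nat.le_succ _))
  exact eqvL_trans hbi (eqvL_symm h1) h2

/-- `M_R` implies `R`-periodicity. -/
lemma minR_rper (hR : MinRAct rm) : RPeriodicAct rm := by
  intro t a
  have hchain : ∀ n, leRAct rm ((fun x => rm x t)^[n + 1] a) ((fun x => rm x t)^[n] a) := by
    intro n
    rw [Function.iterate_succ_apply']
    exact Or.inr ⟨t, rfl⟩
  obtain ⟨m, hm⟩ := hR (fun n => (fun x => rm x t)^[n] a) hchain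
  refine ⟨max 1 m, le_max_left _ _, ?_⟩
  have h1 := hm (max 1 m) (le_max_right _ _)
  have h2 := hm (max 1 m + 1) (le_trans (le_max_right _ _) (Nat.le_succ _))
  exact eqvR_trans hbi (eqvR_symm h1) h2

/-- If `a = (w·a)·y` then `a` lies below all `wⁿ·a` modulo right multipliers. -/
lemma key_chainL {w : S} {a : A} {y : Option T} (h : a = rm1 rm (sm w a) y) :
    ∀ n, ∃ z, a = rm1 rm ((sm w)^[n] a) z := by
  intro n
  induction n with
  | zero => exact ⟨none, rfl⟩
  | succ n ih =>
    obtain ⟨z, hz⟩ := ih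
    refine ⟨omul z y, ?_⟩
    calc a = rm1 rm (sm w a) y := h
      _ = rm1 rm (sm w (rm1 rm ((sm w)^[n] a) z)) y := by rw [← hz]
      _ = rm1 rm (rm1 rm (sm w ((sm w)^[n] a)) z) y := by
            rw [sr_comm_s hbi w _ z]
      _ = rm1 rm (sm w ((sm w)^[n] a)) (omul z y) := rm1_omul hbi _ z y
      _ = rm1 rm ((sm w)^[n + 1] a) (omul z y) := by
            rw [← Function.iterate_succ_apply' (sm w) n a]

/-- Core of left stability from `L`-periodicity. -/
lemma key_leL (hp : LPeriodicAct sm) {w : S} {a : A} {y : Option T}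
    (h : a = rm1 rm (sm w a) y) : leLAct sm a (sm w a) := by
  obtain ⟨n, -, hLn⟩ := hp w a
  obtain ⟨p, hp'⟩ := leL_iff.mp hLn.1
  obtain ⟨z, hz⟩ := key_chainL hbi h n
  refine leL_iff.mpr ⟨p, ?_⟩
  calc a = rm1 rm ((sm w)^[n] a) z := hz
    _ = rm1 rm (sm1 sm p ((sm w)^[n + 1] a)) z := by rw [← hp']
    _ = rm1 rm (sm1 sm p (sm w ((sm w)^[n] a))) z := by rw [Function.iterate_succ_apply']
    _ = sm1 sm p (rm1 rm (sm w ((sm w)^[n] a)) z) := sr_comm hbi p _ z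
    _ = sm1 sm p (sm w (rm1 rm ((sm w)^[n] a) z)) := by rw [sr_comm_s hbi w _ z]
    _ = sm1 sm p (sm w a) := by rw [← hz]

/-- Mirror of `key_chainL`. -/
lemma key_chainR {t : T} {a : A} {x : Option S}
    (h : a = sm1 sm x (rm a t)) :
    ∀ n, ∃ z, a = sm1 sm z ((fun b => rm b t)^[n] a) := by
  intro n
  induction n with
  | zero => exact ⟨none, rfl⟩
  | succ n ih =>
    obtain ⟨z, hz⟩ := ih
    refine ⟨omul x z, ?_⟩
    calc a = sm1 sm x (rm a t) := h
      _ = sm1 sm x (rm (sm1 sm z ((fun b => rm b t)^[n] a)) t) := by rw [← hz]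
      _ = sm1 sm x (sm1 sm z (rm ((fun b => rm b t)^[n] a) t)) := by
            rw [rs_comm_t hbi z _ t]
      _ = sm1 sm (omul x z) (rm ((fun b => rm b t)^[n] a) t) := (sm1_omul hbi x z _).symm
      _ = sm1 sm (omul x z) ((fun b => rm b t)^[n + 1] a) := by
            rw [← Function.iterate_succ_apply' (fun b => rm b t) n a]

/-- Core of right stability from `R`-periodicity. -/
lemma key_leR (hp : RPeriodicAct rm) {t : T} {a : A} {x : Option S}
    (h : a = sm1 sm x (rm a t)) : leRAct rm a (rm a t) := by
  obtain ⟨n, -, hRn⟩ := hp t a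
  obtain ⟨p, hp'⟩ := leR_iff.mp hRn.1
  obtain ⟨z, hz⟩ := key_chainR hbi h n
  refine leR_iff.mpr ⟨p, ?_⟩
  calc a = sm1 sm z ((fun b => rm b t)^[n] a) := hz
    _ = sm1 sm z (rm1 rm ((fun b => rm b t)^[n + 1] a) p) := by rw [← hp']
    _ = sm1 sm z (rm1 rm (rm ((fun b => rm b t)^[n] a) t) p) := by
          rw [Function.iterate_succ_apply' (fun b => rm b t)]
    _ = rm1 rm (sm1 sm z (rm ((fun b => rm b t)^[n] a) t)) p := (sr_comm hbi z _ p).symm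
    _ = rm1 rm (rm (sm1 sm z ((fun b => rm b t)^[n] a)) t) p := by
          rw [rs_comm_t hbi z _ t]
    _ = rm1 rm (rm a t) p := by rw [← hz]

/-- `L`-periodicity implies left stability. -/
lemma lper_leftStable (hp : LPeriodicAct sm) : LeftStableAct sm rm := by
  intro a s hJ
  obtain ⟨x, y, hxy⟩ := leJ_iff.mp hJ.2
  refine ⟨Or.inr ⟨s, rfl⟩, ?_⟩
  cases x with
  | none => exact key_leL hbi hp (by exact hxy)
  | some u =>
    have h' : a = rm1 rm (sm (u * s) a) y := by
      conv_lhs => rw [hxy]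
      rw [sm1_some, hbi.1]
    have h1 : leLAct sm a (sm (u * s) a) := key_leL hbi hp h'
    have h2 : leLAct sm (sm (u * s) a) (sm s a) := Or.inr ⟨u, (hbi.1 u s a).symm⟩
    exact leL_trans hbi h1 h2

/-- `R`-periodicity implies right stability. -/
lemma rper_rightStable (hp : RPeriodicAct rm) : RightStableAct sm rm := by
  intro a t hJ
  obtain ⟨x, y, hxy⟩ := leJ_iff.mp hJ.2
  refine ⟨Or.inr ⟨t, rfl⟩, ?_⟩
  have hxy' : a = sm1 sm x (rm1 rm (rm a t) y) := hxy.trans (sr_comm hbi x (rm a t) y)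
  cases y with
  | none => exact key_leR hbi hp (by exact hxy')
  | some v =>
    have h' : a = sm1 sm x (rm a (t * v)) := by
      conv_lhs => rw [hxy']
      rw [rm1_some, hbi.2.1]
    have h1 : leRAct rm a (rm a (t * v)) := key_leR hbi hp h'
    have h2 : leRAct rm (rm a (t * v)) (rm a t) := by
      exact Or.inr ⟨v, (hbi.2.1 a t v).symm⟩
    exact leR_trans hbi h1 h2

/-- Left stability plus `M_J` gives `M_L`. -/
lemma stable_minJ_minL (hst : LeftStableAct sm rm) (hJ : MinJAct sm rm) :
    MinLAct sm := by
  intro f hf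
  obtain ⟨m, hm⟩ := hJ f fun n => leL_leJ (hf n)
  refine ⟨m, fun n hn => ?_⟩
  obtain ⟨x, hx⟩ := leL_iff.mp (chain_leL hbi hf hn)
  cases x with
  | none =>
    simp only [sm1_none] at hx
    exact ⟨Or.inl hx.symm, Or.inl hx⟩
  | some s =>
    simp only [sm1_some] at hx
    have hJ' : eqvJAct sm rm (sm s (f m)) (f m) := by
      rw [← hx]; exact eqvJ_symm (hm n hn)
    have := hst (f m) s hJ'
    rw [← hx] at this
    exact eqvL_symm this

/-- Right stability plus `M_J` gives `M_R`. -/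
lemma stable_minJ_minR (hst : RightStableAct sm rm) (hJ : MinJAct sm rm) :
    MinRAct rm := by
  intro f hf
  obtain ⟨m, hm⟩ := hJ f fun n => leR_leJ (hf n)
  refine ⟨m, fun n hn => ?_⟩
  obtain ⟨y, hy⟩ := leR_iff.mp (chain_leR hbi hf hn)
  cases y with
  | none =>
    simp only [rm1_none] at hy
    exact ⟨Or.inl hy.symm, Or.inl hy⟩
  | some t =>
    simp only [rm1_some] at hy
    have hJ' : eqvJAct sm rm (rm (f m) t) (f m) := by
      rw [← hy]; exact eqvJ_symm (hm n hn)
    have := hst (f m) t hJ'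
    rw [← hy] at this
    exact eqvR_symm this

/-- `M_L` and `M_R` together give `M_J`. -/
lemma minLR_minJ (hL : MinLAct sm) (hR : MinRAct rm) : MinJAct sm rm := by
  intro f hf
  choose x y hxy using fun n => leJ_iff.mp (hf n)
  -- c n = f 0 · y₀ ⋯ y_{n-1}
  set c : ℕ → A := fun n => Nat.rec (f 0) (fun k ck => rm1 rm ck (y k)) n with hc_def
  have hc : ∀ n, c (n + 1) = rm1 rm (c n) (y n) := fun n => rfl
  -- σ n = x_{n-1} ⋯ x₀
  set σ : ℕ → Option S := fun n => Nat.rec none (fun k σk => omul (x k) σk) n with hσ_def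
  have hσ : ∀ n, σ (n + 1) = omul (x n) (σ n) := fun n => rfl
  have hfc : ∀ n, f n = sm1 sm (σ n) (c n) := by
    intro n
    induction n with
    | zero => rfl
    | succ n ih =>
      calc f (n + 1) = rm1 rm (sm1 sm (x n) (f n)) (y n) := hxy n
        _ = rm1 rm (sm1 sm (x n) (sm1 sm (σ n) (c n))) (y n) := by rw [← ih]
        _ = sm1 sm (x n) (rm1 rm (sm1 sm (σ n) (c n)) (y n)) := sr_comm hbi _ _ _
        _ = sm1 sm (x n) (sm1 sm (σ n) (rm1 rm (c n) (y n))) := by rw [sr_comm hbi (σ n)]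
        _ = sm1 sm (omul (x n) (σ n)) (rm1 rm (c n) (y n)) := (sm1_omul hbi _ _ _).symm
        _ = sm1 sm (σ (n + 1)) (c (n + 1)) := by rw [hσ, hc]
  obtain ⟨m, hm⟩ := hR c fun n => leR_iff.mpr ⟨y n, hc n⟩
  set d : ℕ → A := fun n => sm1 sm (σ n) (c m) with hd_def
  have hdchain : ∀ n, leLAct sm (d (n + 1)) (d n) := by
    intro n
    refine leL_iff.mpr ⟨x n, ?_⟩
    show sm1 sm (σ (n + 1)) (c m) = sm1 sm (x n) (sm1 sm (σ n) (c m))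
    rw [hσ, sm1_omul hbi]
  obtain ⟨k, hk⟩ := hL d hdchain
  refine ⟨max k m, fun n hn => ?_⟩
  have hKm : m ≤ max k m := le_max_right _ _
  have hKk : k ≤ max k m := le_max_left _ _
  refine ⟨?_, chain_leJ hbi hf hn⟩
  -- leJ (f (max k m)) (f n)
  have e1 : eqvRAct rm (c m) (c (max k m)) := hm _ hKm
  have e1' : eqvRAct rm (c m) (c n) := hm _ (le_trans hKm hn)
  have e4 : eqvLAct sm (d (max k m)) (d n) :=
    eqvL_trans hbi (eqvL_symm (hk _ hKk)) (hk _ (le_trans hKk hn))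
  obtain ⟨r, hr⟩ := leR_iff.mp e1.2
  obtain ⟨q, hq⟩ := leR_iff.mp e1'.1
  obtain ⟨p, hp⟩ := leL_iff.mp e4.1
  refine leJ_iff.mpr ⟨p, omul q r, ?_⟩
  have hdn : d n = rm1 rm (f n) q := by
    calc d n = sm1 sm (σ n) (rm1 rm (c n) q) := by rw [hd_def]; rw [← hq]
      _ = rm1 rm (sm1 sm (σ n) (c n)) q := (sr_comm hbi _ _ _).symm
      _ = rm1 rm (f n) q := by rw [← hfc]
  calc f (max k m) = sm1 sm (σ (max k m)) (c (max k m)) := hfc _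
    _ = sm1 sm (σ (max k m)) (rm1 rm (c m) r) := by rw [← hr]
    _ = rm1 rm (sm1 sm (σ (max k m)) (c m)) r := (sr_comm hbi _ _ _).symm
    _ = rm1 rm (d (max k m)) r := rfl
    _ = rm1 rm (sm1 sm p (d n)) r := by rw [← hp]
    _ = rm1 rm (sm1 sm p (rm1 rm (f n) q)) r := by rw [hdn]
    _ = rm1 rm (rm1 rm (sm1 sm p (f n)) q) r := by rw [sr_comm hbi p (f n) q]
    _ = rm1 rm (sm1 sm p (f n)) (omul q r) := rm1_omul hbi _ _ _

end

end BiactAux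

/-- For a biact `A`, the following are equivalent: (1) `A` satisfies `M_L` and `M_R`;
(2) `A` satisfies `M_J` and is both `L`- and `R`-periodic; (3) `A` is stable and
satisfies `M_J`. -/
theorem minL_and_minR_tfae {S T A : Type*} [Semigroup S] [Semigroup T]
    (sm : S → A → A) (rm : A → T → A) (hbi : IsBiact sm rm) :
    ((MinLAct sm ∧ MinRAct rm) ↔ (MinJAct sm rm ∧ LPeriodicAct sm ∧ RPeriodicAct rm)) ∧
    ((MinLAct sm ∧ MinRAct rm) ↔ (StableAct sm rm ∧ MinJAct sm rm)) := by
  open BiactAux in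
  constructor
  · constructor
    · rintro ⟨hL, hR⟩
      exact ⟨minLR_minJ hbi hL hR, minL_lper hbi hL, minR_rper hbi hR⟩
    · rintro ⟨hJ, hLp, hRp⟩
      exact ⟨stable_minJ_minL hbi (lper_leftStable hbi hLp) hJ,
        stable_minJ_minR hbi (rper_rightStable hbi hRp) hJ⟩
  · constructor
    · rintro ⟨hL, hR⟩
      exact ⟨⟨lper_leftStable hbi (minL_lper hbi hL),
        rper_rightStable hbi (minR_rper hbi hR)⟩, minLR_minJ hbi hL hR⟩
    · rintro ⟨⟨hls, hrs⟩, hJ⟩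
      exact ⟨stable_minJ_minL hbi hls hJ, stable_minJ_minR hbi hrs hJ⟩
end

section
/- Let S and T be semigroups. If S satisfies M_L and T satisfies M_R, then every (S,T)-biact satisfies both M_L and M_R. -/
/-! A descending `≤_L`-chain in `A` is either constant or, from some term `act u a` on, of the
form `act (c n) a` for a descending `≤_L`-chain `c` in `M`; the orbit map `x ↦ act x a` carries the
stabilisation of `c` over to `A`. `M_R` for a right action is `M_L` for the flipped action of `T`
with the reversed product. -/

section Transfer

variable {M A : Type*} {mul : M → M → M} {act : M → A → A}

theorem leLAct_act_of_leLAct (hact : ∀ s s' a, act s (act s' a) = act (mul s s') a)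
    {x y : M} (h : leLAct mul x y) (a : A) : leLAct act (act x a) (act y a) := by
  rcases h with rfl | ⟨s, rfl⟩
  · exact Or.inl rfl
  · exact Or.inr ⟨s, (hact s y a).symm⟩

theorem eqvLAct_act_of_eqvLAct (hact : ∀ s s' a, act s (act s' a) = act (mul s s') a)
    {x y : M} (h : eqvLAct mul x y) (a : A) : eqvLAct act (act x a) (act y a) :=
  ⟨leLAct_act_of_leLAct hact h.1 a, leLAct_act_of_leLAct hact h.2 a⟩

theorem exists_leLAct_act_of_leLAct (hact : ∀ s s' a, act s (act s' a) = act (mul s s') a)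
    {b a : A} {x : M} (h : leLAct act b (act x a)) : ∃ y, leLAct mul y x ∧ b = act y a := by
  rcases h with rfl | ⟨s, rfl⟩
  · exact ⟨x, Or.inl rfl, rfl⟩
  · exact ⟨mul s x, Or.inr ⟨s, rfl⟩, hact s x a⟩

theorem exists_leLAct_chain_lift (hact : ∀ s s' a, act s (act s' a) = act (mul s s') a)
    {f : ℕ → A} (hf : ∀ n, leLAct act (f (n + 1)) (f n)) {a : A} {u : M} (h0 : f 0 = act u a) :
    ∃ c : ℕ → M, (∀ n, leLAct mul (c (n + 1)) (c n)) ∧ ∀ n, f n = act (c n) a := by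
  have step : ∀ n x, ∃ y, leLAct mul y x ∧ (f n = act x a → f (n + 1) = act y a) := by
    intro n x
    by_cases hx : f n = act x a
    · obtain ⟨y, hy, e⟩ := exists_leLAct_act_of_leLAct hact (hx ▸ hf n)
      exact ⟨y, hy, fun _ => e⟩
    · exact ⟨x, Or.inl rfl, fun h => absurd h hx⟩
  choose next hle hnext using step
  let c : ℕ → M := fun n => Nat.rec u next n
  refine ⟨c, fun n => hle n (c n), fun n => ?_⟩
  induction n with
  | zero => exact h0
  | succ n ih => exact hnext n (c n) ih

theorem minLAct_of_act (hact : ∀ s s' a, act s (act s' a) = act (mul s s') a)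
    (hM : MinLAct mul) : MinLAct act := by
  intro f hf
  by_cases hconst : ∀ n, f (n + 1) = f n
  · have hf0 : ∀ n, f n = f 0 := fun n => by
      induction n with
      | zero => rfl
      | succ n ih => rw [hconst, ih]
    exact ⟨0, fun n _ => by rw [hf0 n]; exact ⟨Or.inl rfl, Or.inl rfl⟩⟩
  push Not at hconst
  obtain ⟨n₀, hn₀⟩ := hconst
  obtain ⟨u, hu⟩ := (hf n₀).resolve_left hn₀
  obtain ⟨c, hc, hfc⟩ :=
    exists_leLAct_chain_lift hact (f := fun k => f (n₀ + 1 + k)) (fun k => hf _) hu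
  obtain ⟨m, hm⟩ := hM c hc
  refine ⟨n₀ + 1 + m, fun n hn => ?_⟩
  obtain ⟨k, rfl⟩ := Nat.exists_eq_add_of_le hn
  have hstable := eqvLAct_act_of_eqvLAct hact (hm (m + k) (by omega)) (f n₀)
  rw [← hfc, ← hfc] at hstable
  rwa [add_assoc (n₀ + 1)]

end Transfer

theorem minRAct_iff_minLAct_flip {T A : Type*} (rm : A → T → A) :
    MinRAct rm ↔ MinLAct (flip rm) :=
  Iff.rfl

/-- If `S` satisfies `M_L` and `T` satisfies `M_R`, then every `(S,T)`-biact
satisfies both `M_L` and `M_R`. -/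
theorem biact_minL_and_minR_of_semigroups {S T A : Type*} [Semigroup S] [Semigroup T]
    (hS : MinLAct (fun (s a : S) => s * a))
    (hT : MinRAct (fun (a t : T) => a * t))
    (sm : S → A → A) (rm : A → T → A) (hbi : IsBiact sm rm) :
    MinLAct sm ∧ MinRAct rm := by
  obtain ⟨hassocL, hassocR, -⟩ := hbi
  refine ⟨minLAct_of_act hassocL hS, (minRAct_iff_minLAct_flip rm).2 ?_⟩
  exact minLAct_of_act (mul := flip (· * ·)) (fun t t' a => hassocR a t' t)
    ((minRAct_iff_minLAct_flip _).1 hT)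
end

section
/- Let S and T be semigroups, A an (S,T)-biact, and ρ a congruence on A. For each K ∈ {L,R,J}: if A satisfies M_K, then the quotient biact A/ρ satisfies M_K. -/
section GenAux

variable {W A : Type*}

/-- Generic "Green preorder" given by a family of unary maps. -/
def leGen (F : W → A → A) (a b : A) : Prop := a = b ∨ ∃ w, a = F w b

/-- Generic minimal condition. -/
def minGen (F : W → A → A) : Prop :=
  ∀ f : ℕ → A, (∀ n, leGen F (f (n + 1)) (f n)) →
    ∃ m, ∀ n ≥ m, leGen F (f m) (f n) ∧ leGen F (f n) (f m)

lemma quot_minGen (F : W → A → A) (r : A → A → Prop)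
    (hc : ∀ w a b, r a b → r (F w a) (F w b)) (hmin : minGen F) :
    minGen (fun w => Quot.map (F w) (hc w)) := by
  classical
  intro f hf
  set FQ : W → Quot r → Quot r := fun w => Quot.map (F w) (hc w) with hFQ
  let h : ℕ → A := fun n => Nat.rec (Quot.out (f 0))
    (fun n hn => if hs : ∃ w, f (n + 1) = FQ w (f n) then F hs.choose hn else hn) n
  have h0 : h 0 = Quot.out (f 0) := rfl
  have hstep : ∀ n, h (n + 1) =
      if hs : ∃ w, f (n + 1) = FQ w (f n) then F hs.choose (h n) else h n :=
    fun n => rfl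
  have hmk : ∀ n, Quot.mk r (h n) = f n := by
    intro n; induction n with
    | zero => simpa [h0] using Quot.out_eq (f 0)
    | succ n ih =>
      rw [hstep n]
      by_cases hs : ∃ w, f (n + 1) = FQ w (f n)
      · rw [dif_pos hs]
        have hq : Quot.mk r (F hs.choose (h n)) = FQ hs.choose (Quot.mk r (h n)) := rfl
        rw [hq, ih]
        exact hs.choose_spec.symm
      · rw [dif_neg hs]
        rcases hf n with he | ⟨w, hw⟩
        · rw [ih, he]
        · exact absurd ⟨w, hw⟩ hs
  have hch : ∀ n, leGen F (h (n + 1)) (h n) := by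
    intro n
    rw [hstep n]
    by_cases hs : ∃ w, f (n + 1) = FQ w (f n)
    · rw [dif_pos hs]; exact Or.inr ⟨hs.choose, rfl⟩
    · rw [dif_neg hs]; exact Or.inl rfl
  obtain ⟨m, hm⟩ := hmin h hch
  refine ⟨m, fun n hn => ?_⟩
  have push : ∀ a b : A, leGen F a b → leGen FQ (Quot.mk r a) (Quot.mk r b) := by
    rintro a b (rfl | ⟨w, rfl⟩)
    · exact Or.inl rfl
    · exact Or.inr ⟨w, rfl⟩
  obtain ⟨h1, h2⟩ := hm n hn
  rw [← hmk m, ← hmk n]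
  exact ⟨push _ _ h1, push _ _ h2⟩

end GenAux

/-- If a biact `A` satisfies `M_K` (for `K ∈ {L, R, J}`) then so does the
quotient biact `A/ρ` by any biact congruence `ρ`. -/
theorem quotient_biact_minK {S T A : Type*} [Semigroup S] [Semigroup T]
    (sm : S → A → A) (rm : A → T → A) (hbi : IsBiact sm rm)
    (r : A → A → Prop) (hr : Equivalence r)
    (hl : ∀ (s : S) (a b : A), r a b → r (sm s a) (sm s b))
    (hrc : ∀ (t : T) (a b : A), r a b → r (rm a t) (rm b t)) :
    (MinLAct sm → MinLAct (fun (s : S) => Quot.map (sm s) (hl s))) ∧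
    (MinRAct rm →
      MinRAct (fun (x : Quot r) (t : T) => Quot.map (fun a => rm a t) (hrc t) x)) ∧
    (MinJAct sm rm →
      MinJAct (fun (s : S) => Quot.map (sm s) (hl s))
        (fun (x : Quot r) (t : T) => Quot.map (fun a => rm a t) (hrc t) x)) := by
  refine ⟨fun hmin => quot_minGen sm r hl hmin,
    fun hmin => quot_minGen (fun t a => rm a t) r (fun t a b h => hrc t a b h) hmin,
    fun hmin => ?_⟩
  -- the `J` case via the index type `S ⊕ T ⊕ S × T`
  set F : (S ⊕ T ⊕ S × T) → A → A := fun w a =>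
    match w with
    | .inl s => sm s a
    | .inr (.inl t) => rm a t
    | .inr (.inr (s, t)) => rm (sm s a) t with hF
  have hc : ∀ w a b, r a b → r (F w a) (F w b) := by
    rintro (s | t | ⟨s, t⟩) a b hab
    · exact hl s a b hab
    · exact hrc t a b hab
    · exact hrc t _ _ (hl s a b hab)
  have hiff : ∀ a b : A, leJAct sm rm a b ↔ leGen F a b := by
    intro a b
    constructor
    · rintro (rfl | ⟨s, rfl⟩ | ⟨t, rfl⟩ | ⟨s, t, rfl⟩)
      exacts [Or.inl rfl, Or.inr ⟨.inl s, rfl⟩, Or.inr ⟨.inr (.inl t), rfl⟩,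
        Or.inr ⟨.inr (.inr (s, t)), rfl⟩]
    · rintro (rfl | ⟨(s | t | ⟨s, t⟩), rfl⟩)
      exacts [Or.inl rfl, Or.inr (Or.inl ⟨s, rfl⟩), Or.inr (Or.inr (Or.inl ⟨t, rfl⟩)),
        Or.inr (Or.inr (Or.inr ⟨s, t, rfl⟩))]
  have hminG : minGen F := by
    intro g hg
    obtain ⟨m, hm⟩ := hmin g (fun n => (hiff _ _).mpr (hg n))
    exact ⟨m, fun n hn => ⟨(hiff _ _).mp (hm n hn).1, (hiff _ _).mp (hm n hn).2⟩⟩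
  have key := quot_minGen F r hc hminG
  set FQ : (S ⊕ T ⊕ S × T) → Quot r → Quot r := fun w => Quot.map (F w) (hc w) with hFQ
  have hcomp : ∀ (s : S) (t : T) (x : Quot r),
      FQ (.inr (.inr (s, t))) x =
        Quot.map (fun a => rm a t) (hrc t) (Quot.map (sm s) (hl s) x) := by
    intro s t x; induction x using Quot.ind; rfl
  have hiffQ : ∀ x y : Quot r,
      leJAct (fun (s : S) => Quot.map (sm s) (hl s))
        (fun (x : Quot r) (t : T) => Quot.map (fun a => rm a t) (hrc t) x) x y ↔
      leGen FQ x y := by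
    intro x y
    constructor
    · rintro (rfl | ⟨s, rfl⟩ | ⟨t, rfl⟩ | ⟨s, t, rfl⟩)
      exacts [Or.inl rfl, Or.inr ⟨.inl s, rfl⟩, Or.inr ⟨.inr (.inl t), rfl⟩,
        Or.inr ⟨.inr (.inr (s, t)), (hcomp s t y).symm⟩]
    · rintro (rfl | ⟨(s | t | ⟨s, t⟩), rfl⟩)
      · exact Or.inl rfl
      · exact Or.inr (Or.inl ⟨s, rfl⟩)
      · exact Or.inr (Or.inr (Or.inl ⟨t, rfl⟩))
      · exact Or.inr (Or.inr (Or.inr ⟨s, t, hcomp s t y⟩))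
  intro f hf
  obtain ⟨m, hm⟩ := key f (fun n => (hiffQ _ _).mp (hf n))
  exact ⟨m, fun n hn => ⟨(hiffQ _ _).mpr (hm n hn).1, (hiffQ _ _).mpr (hm n hn).2⟩⟩
end

section
/- Let S be a semigroup and ρ a congruence on S. For each K ∈ {L,R,J}: if S satisfies M_K, then the quotient semigroup S/ρ satisfies M_K. -/
section Lift

/-- Lift a descending chain in a quotient to a descending chain upstairs. -/
theorem exists_lift_chain {S : Type*} [Nonempty S] (r : S → S → Prop)
    (le : S → S → Prop) (f : ℕ → Quot r)
    (step : ∀ (y : S) (n : ℕ), Quot.mk r y = f n →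
      ∃ x, Quot.mk r x = f (n + 1) ∧ le x y) :
    ∃ g : ℕ → S, (∀ n, Quot.mk r (g n) = f n) ∧ ∀ n, le (g (n + 1)) (g n) := by
  have h' : ∀ (n : ℕ) (y : S), ∃ x,
      Quot.mk r y = f n → Quot.mk r x = f (n + 1) ∧ le x y := by
    intro n y
    by_cases h : Quot.mk r y = f n
    · obtain ⟨x, hx⟩ := step y n h
      exact ⟨x, fun _ => hx⟩
    · exact ⟨Classical.arbitrary S, fun h'' => absurd h'' h⟩
  let g : ℕ → S := fun n =>
    Nat.rec (Classical.choose (Quot.exists_rep (f 0)))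
      (fun n gn => Classical.choose (h' n gn)) n
  have hg : ∀ n, Quot.mk r (g n) = f n := by
    intro n
    induction n with
    | zero => exact Classical.choose_spec (Quot.exists_rep (f 0))
    | succ n ih => exact (Classical.choose_spec (h' n (g n)) ih).1
  exact ⟨g, hg, fun n => (Classical.choose_spec (h' n (g n)) (hg n)).2⟩

end Lift

/-- If a semigroup `S` satisfies `M_K` (for `K ∈ {L, R, J}`) then so does the
quotient semigroup `S/ρ` by any congruence `ρ`. -/
theorem quotient_semigroup_minK {S : Type*} [Semigroup S]
    (r : S → S → Prop) (hr : Equivalence r)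
    (hc : ∀ a b c d : S, r a b → r c d → r (a * c) (b * d)) :
    (MinLAct (fun (s a : S) => s * a) →
      MinLAct (Quot.map₂ (· * ·)
        (fun a b₁ b₂ h => hc a a b₁ b₂ (hr.refl a) h)
        (fun a₁ a₂ b h => hc a₁ a₂ b b h (hr.refl b)))) ∧
    (MinRAct (fun (a s : S) => a * s) →
      MinRAct (Quot.map₂ (· * ·)
        (fun a b₁ b₂ h => hc a a b₁ b₂ (hr.refl a) h)
        (fun a₁ a₂ b h => hc a₁ a₂ b b h (hr.refl b)))) ∧
    (MinJAct (fun (s a : S) => s * a) (fun (a s : S) => a * s) →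
      MinJAct (Quot.map₂ (· * ·)
        (fun a b₁ b₂ h => hc a a b₁ b₂ (hr.refl a) h)
        (fun a₁ a₂ b h => hc a₁ a₂ b b h (hr.refl b)))
        (Quot.map₂ (· * ·)
        (fun a b₁ b₂ h => hc a a b₁ b₂ (hr.refl a) h)
        (fun a₁ a₂ b h => hc a₁ a₂ b b h (hr.refl b)))) := by
    classical
  set q : S → Quot r := Quot.mk r with hq
  set m2 : Quot r → Quot r → Quot r := Quot.map₂ (· * ·)
    (fun a b₁ b₂ h => hc a a b₁ b₂ (hr.refl a) h)
    (fun a₁ a₂ b h => hc a₁ a₂ b b h (hr.refl b)) with hm2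
  have hmk : ∀ a b : S, m2 (Quot.mk r a) (Quot.mk r b) = Quot.mk r (a * b) := fun a b => rfl
  have hLmono : ∀ a b : S, leLAct (fun (s a : S) => s * a) a b → leLAct m2 (q a) (q b) := by
    rintro a b (rfl | ⟨s, rfl⟩)
    · exact Or.inl rfl
    · exact Or.inr ⟨q s, (hmk s b).symm⟩
  have hRmono : ∀ a b : S, leRAct (fun (a s : S) => a * s) a b → leRAct m2 (q a) (q b) := by
    rintro a b (rfl | ⟨t, rfl⟩)
    · exact Or.inl rfl
    · exact Or.inr ⟨q t, (hmk b t).symm⟩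
  have hJmono : ∀ a b : S, leJAct (fun (s a : S) => s * a) (fun (a s : S) => a * s) a b →
      leJAct m2 m2 (q a) (q b) := by
    rintro a b (rfl | ⟨s, rfl⟩ | ⟨t, rfl⟩ | ⟨s, t, rfl⟩)
    · exact Or.inl rfl
    · exact Or.inr (Or.inl ⟨q s, (hmk s b).symm⟩)
    · exact Or.inr (Or.inr (Or.inl ⟨q t, (hmk b t).symm⟩))
    · refine Or.inr (Or.inr (Or.inr ⟨q s, q t, ?_⟩))
      rw [hmk, hmk]
  refine ⟨?_, ?_, ?_⟩
  · intro hmin f hf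
    have hne : Nonempty S := ⟨Classical.choose (Quot.exists_rep (f 0))⟩
    have hstep : ∀ (y : S) (n : ℕ), Quot.mk r y = f n →
        ∃ x, Quot.mk r x = f (n + 1) ∧ leLAct (fun (s a : S) => s * a) x y := by
      intro y n hy
      rcases hf n with h | ⟨s, hs⟩
      · exact ⟨y, by rw [hy, ← h], Or.inl rfl⟩
      · obtain ⟨s', rfl⟩ := Quot.exists_rep s
        exact ⟨s' * y, by rw [← hmk, hy, ← hs], Or.inr ⟨s', rfl⟩⟩
    obtain ⟨g, hg, hgle⟩ := exists_lift_chain r (leLAct (fun (s a : S) => s * a)) f hstep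
    obtain ⟨m, hm⟩ := hmin g hgle
    refine ⟨m, fun n hn => ?_⟩
    rw [← hg m, ← hg n]
    exact ⟨hLmono _ _ (hm n hn).1, hLmono _ _ (hm n hn).2⟩
  · intro hmin f hf
    have hne : Nonempty S := ⟨Classical.choose (Quot.exists_rep (f 0))⟩
    have hstep : ∀ (y : S) (n : ℕ), Quot.mk r y = f n →
        ∃ x, Quot.mk r x = f (n + 1) ∧ leRAct (fun (a s : S) => a * s) x y := by
      intro y n hy
      rcases hf n with h | ⟨t, ht⟩
      · exact ⟨y, by rw [hy, ← h], Or.inl rfl⟩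
      · obtain ⟨t', rfl⟩ := Quot.exists_rep t
        exact ⟨y * t', by rw [← hmk, hy, ← ht], Or.inr ⟨t', rfl⟩⟩
    obtain ⟨g, hg, hgle⟩ := exists_lift_chain r (leRAct (fun (a s : S) => a * s)) f hstep
    obtain ⟨m, hm⟩ := hmin g hgle
    refine ⟨m, fun n hn => ?_⟩
    rw [← hg m, ← hg n]
    exact ⟨hRmono _ _ (hm n hn).1, hRmono _ _ (hm n hn).2⟩
  · intro hmin f hf
    have hne : Nonempty S := ⟨Classical.choose (Quot.exists_rep (f 0))⟩
    have hstep : ∀ (y : S) (n : ℕ), Quot.mk r y = f n →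
        ∃ x, Quot.mk r x = f (n + 1) ∧ leJAct (fun (s a : S) => s * a) (fun (a s : S) => a * s) x y := by
      intro y n hy
      rcases hf n with h | ⟨s, hs⟩ | ⟨t, ht⟩ | ⟨s, t, hst⟩
      · exact ⟨y, by rw [hy, ← h], Or.inl rfl⟩
      · obtain ⟨s', rfl⟩ := Quot.exists_rep s
        exact ⟨s' * y, by rw [← hmk, hy, ← hs], Or.inr (Or.inl ⟨s', rfl⟩)⟩
      · obtain ⟨t', rfl⟩ := Quot.exists_rep t
        exact ⟨y * t', by rw [← hmk, hy, ← ht], Or.inr (Or.inr (Or.inl ⟨t', rfl⟩))⟩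
      · obtain ⟨s', rfl⟩ := Quot.exists_rep s
        obtain ⟨t', rfl⟩ := Quot.exists_rep t
        exact ⟨s' * y * t', by rw [← hmk, ← hmk, hy, ← hst],
          Or.inr (Or.inr (Or.inr ⟨s', t', rfl⟩))⟩
    obtain ⟨g, hg, hgle⟩ := exists_lift_chain r (leJAct (fun (s a : S) => s * a) (fun (a s : S) => a * s)) f hstep
    obtain ⟨m, hm⟩ := hmin g hgle
    refine ⟨m, fun n hn => ?_⟩
    rw [← hg m, ← hg n]
    exact ⟨hJmono _ _ (hm n hn).1, hJmono _ _ (hm n hn).2⟩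
end

section
/- Let S and T be semigroups, A an (S,T)-biact, and B a subact of A. For each K ∈ {L,R,J}: A satisfies M_K if and only if both B (as an (S,T)-biact under the restricted actions) and the Rees quotient A/B satisfy M_K. -/
/-- `B` is a subact of the biact `A`: a nonempty subset closed under both actions. -/
def IsSubact {S T A : Type*} (sm : S → A → A) (rm : A → T → A) (B : Set A) : Prop :=
  B.Nonempty ∧ (∀ (s : S), ∀ b ∈ B, sm s b ∈ B) ∧ (∀ (t : T), ∀ b ∈ B, rm b t ∈ B)

section ReesQuotient

open Classical

/-- The left action of the Rees quotient `A/B`, on `(A \ B) ⊔ {0}` (with `0 = none`). -/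
noncomputable def reesSm {S A : Type*} (sm : S → A → A) (B : Set A) (s : S) :
    Option {a : A // a ∉ B} → Option {a : A // a ∉ B} :=
  fun x => x.bind fun a => if h : sm s a.1 ∈ B then none else some ⟨sm s a.1, h⟩

/-- The right action of the Rees quotient `A/B`, on `(A \ B) ⊔ {0}` (with `0 = none`). -/
noncomputable def reesRm {T A : Type*} (rm : A → T → A) (B : Set A) :
    Option {a : A // a ∉ B} → T → Option {a : A // a ∉ B} :=
  fun x t => x.bind fun a => if h : rm a.1 t ∈ B then none else some ⟨rm a.1 t, h⟩

end ReesQuotient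

/-! The preorders `≤_L`, `≤_R` and `≤_J` are each of the form `a = b ∨ ∃ i, a = f i b` for a family
of self-maps `f i` of `A` (for `≤_J` the maps `s · -`, `- · t` and `s · - · t`). The subact `B` is
closed under each family, and the Rees quotient `A/B` carries the induced family, so it suffices to
treat a single family of maps.

A descending chain in `A/B` either reaches `0` and stays there, or it lies in `A ∖ B`, where `A` and
`A/B` have the same order. Conversely, a descending chain in `A` projects to one in `A/B`, which
stabilises from some index `m` on: if `a_m ∈ B`, the rest of the chain lies in `B`; otherwise it
stays in `A ∖ B`. -/

section MapFamily

-- `leLAct`, `eqvLAct` and `MinLAct` make sense for any family of maps `I → A → A`.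
variable {I A : Type*} {act : I → A → A} {B : Set A}

def restrictAct (act : I → A → A) (B : Set A) (hB : ∀ i, ∀ b ∈ B, act i b ∈ B) (i : I) (b : B) :
    B :=
  ⟨act i b, hB i b b.2⟩

open Classical in
noncomputable def reesProj (B : Set A) (a : A) : Option {a : A // a ∉ B} :=
  if h : a ∈ B then none else some ⟨a, h⟩

theorem reesProj_eq_none {a : A} : reesProj B a = none ↔ a ∈ B := by
  simp [reesProj]

theorem reesProj_of_notMem {a : A} (h : a ∉ B) : reesProj B a = some ⟨a, h⟩ :=
  dif_neg h

theorem some_eq_reesProj_iff {x : {a : A // a ∉ B}} {a : A} : some x = reesProj B a ↔ x.1 = a := by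
  by_cases h : a ∈ B
  · simp only [reesProj, h, dif_pos, reduceCtorEq, false_iff]
    exact fun hx => x.2 (hx ▸ h)
  · simp [reesProj_of_notMem h, Subtype.ext_iff]

theorem reesSm_some (i : I) (x : {a : A // a ∉ B}) :
    reesSm act B i (some x) = reesProj B (act i x) :=
  rfl

theorem reesProj_act (hB : ∀ i, ∀ b ∈ B, act i b ∈ B) (i : I) (a : A) :
    reesProj B (act i a) = reesSm act B i (reesProj B a) := by
  by_cases h : a ∈ B
  · rw [reesProj_eq_none.2 h, reesProj_eq_none.2 (hB i a h)]
    rfl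
  · rw [reesProj_of_notMem h, reesSm_some]

theorem mem_of_leLAct (hB : ∀ i, ∀ b ∈ B, act i b ∈ B) {a b : A} (h : leLAct act a b)
    (hb : b ∈ B) : a ∈ B := by
  rcases h with rfl | ⟨i, rfl⟩
  exacts [hb, hB i b hb]

theorem leLAct_restrictAct_iff {hB : ∀ i, ∀ b ∈ B, act i b ∈ B} {a b : B} :
    leLAct (restrictAct act B hB) a b ↔ leLAct act a.1 b.1 := by
  simp only [leLAct, restrictAct, Subtype.ext_iff]

theorem eqvLAct_restrictAct_iff {hB : ∀ i, ∀ b ∈ B, act i b ∈ B} {a b : B} :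
    eqvLAct (restrictAct act B hB) a b ↔ eqvLAct act a.1 b.1 := by
  simp only [eqvLAct, leLAct_restrictAct_iff]

theorem leLAct_reesSm_none_iff {x : Option {a : A // a ∉ B}} :
    leLAct (reesSm act B) x none ↔ x = none := by
  refine ⟨?_, fun h => Or.inl h⟩
  rintro (h | ⟨i, h⟩)
  exacts [h, h]

theorem leLAct_reesSm_some_iff {x y : {a : A // a ∉ B}} :
    leLAct (reesSm act B) (some x) (some y) ↔ leLAct act x.1 y.1 := by
  simp only [leLAct, reesSm_some, some_eq_reesProj_iff, Option.some_inj, Subtype.ext_iff]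

theorem eqvLAct_reesSm_some_iff {x y : {a : A // a ∉ B}} :
    eqvLAct (reesSm act B) (some x) (some y) ↔ eqvLAct act x.1 y.1 := by
  simp only [eqvLAct, leLAct_reesSm_some_iff]

theorem leLAct_reesProj (hB : ∀ i, ∀ b ∈ B, act i b ∈ B) {a b : A} (h : leLAct act a b) :
    leLAct (reesSm act B) (reesProj B a) (reesProj B b) := by
  rcases h with rfl | ⟨i, rfl⟩
  exacts [Or.inl rfl, Or.inr ⟨i, reesProj_act hB i b⟩]

theorem minLAct_restrictAct (hB : ∀ i, ∀ b ∈ B, act i b ∈ B) (h : MinLAct act) :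
    MinLAct (restrictAct act B hB) := by
  intro f hf
  obtain ⟨m, hm⟩ := h (fun n => (f n).1) fun n => leLAct_restrictAct_iff.1 (hf n)
  exact ⟨m, fun n hn => eqvLAct_restrictAct_iff.2 (hm n hn)⟩

theorem minLAct_reesSm (h : MinLAct act) : MinLAct (reesSm act B) := by
  intro g hg
  by_cases hzero : ∃ m, g m = none
  · obtain ⟨m, hm⟩ := hzero
    have hzero : ∀ n ≥ m, g n = none := by
      intro n hn
      induction n, hn using Nat.le_induction with
      | base => exact hm
      | succ n _ ih => exact leLAct_reesSm_none_iff.1 (ih ▸ hg n)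
    refine ⟨m, fun n hn => ?_⟩
    rw [hm, hzero n hn]
    exact ⟨Or.inl rfl, Or.inl rfl⟩
  · simp only [not_exists] at hzero
    choose x hx using fun n => Option.ne_none_iff_exists'.1 (hzero n)
    obtain ⟨m, hm⟩ := h (fun n => (x n).1) fun n => by
      simpa only [hx, leLAct_reesSm_some_iff] using hg n
    exact ⟨m, fun n hn => by simpa only [hx, eqvLAct_reesSm_some_iff] using hm n hn⟩

theorem minLAct_of_restrictAct_of_reesSm (hB : ∀ i, ∀ b ∈ B, act i b ∈ B)
    (hBmin : MinLAct (restrictAct act B hB)) (hQmin : MinLAct (reesSm act B)) : MinLAct act := by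
  intro f hf
  obtain ⟨m, hm⟩ := hQmin (fun n => reesProj B (f n)) fun n => leLAct_reesProj hB (hf n)
  by_cases hmB : f m ∈ B
  · have htail : ∀ k, f (m + k) ∈ B := by
      intro k
      induction k with
      | zero => exact hmB
      | succ k ih => exact mem_of_leLAct hB (hf (m + k)) ih
    obtain ⟨k₀, hk₀⟩ := hBmin (fun k => ⟨f (m + k), htail k⟩) fun k =>
      leLAct_restrictAct_iff.2 (hf (m + k))
    refine ⟨m + k₀, fun n hn => ?_⟩
    obtain ⟨k, rfl⟩ := Nat.exists_eq_add_of_le hn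
    simpa only [add_assoc] using eqvLAct_restrictAct_iff.1 (hk₀ (k₀ + k) (Nat.le_add_right _ _))
  · refine ⟨m, fun n hn => ?_⟩
    have hnB : f n ∉ B := fun hnB => by
      have h := (hm n hn).1
      rw [reesProj_eq_none.2 hnB, leLAct_reesSm_none_iff, reesProj_eq_none] at h
      exact hmB h
    have h := hm n hn
    rw [reesProj_of_notMem hmB, reesProj_of_notMem hnB] at h
    exact eqvLAct_reesSm_some_iff.1 h

theorem minLAct_iff_restrictAct_and_reesSm (hB : ∀ i, ∀ b ∈ B, act i b ∈ B) :
    MinLAct act ↔ MinLAct (restrictAct act B hB) ∧ MinLAct (reesSm act B) :=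
  ⟨fun h => ⟨minLAct_restrictAct hB h, minLAct_reesSm h⟩,
    fun h => minLAct_of_restrictAct_of_reesSm hB h.1 h.2⟩

end MapFamily

section GreenJ

variable {S T A : Type*} {B : Set A}

def actJ (sm : S → A → A) (rm : A → T → A) : S ⊕ T ⊕ S × T → A → A
  | .inl s => sm s
  | .inr (.inl t) => fun a => rm a t
  | .inr (.inr (s, t)) => fun a => rm (sm s a) t

theorem leJAct_eq_leLAct_actJ (sm : S → A → A) (rm : A → T → A) :
    leJAct sm rm = leLAct (actJ sm rm) := by
  ext a b
  simp only [leJAct, leLAct, Sum.exists, Prod.exists, actJ]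

theorem minJAct_iff_minLAct_actJ (sm : S → A → A) (rm : A → T → A) :
    MinJAct sm rm ↔ MinLAct (actJ sm rm) := by
  simp only [MinJAct, MinLAct, eqvJAct, eqvLAct, leJAct_eq_leLAct_actJ]

theorem actJ_mem {sm : S → A → A} {rm : A → T → A} (hsm : ∀ s, ∀ b ∈ B, sm s b ∈ B)
    (hrm : ∀ t, ∀ b ∈ B, rm b t ∈ B) : ∀ i, ∀ b ∈ B, actJ sm rm i b ∈ B
  | .inl s, b, hb => hsm s b hb
  | .inr (.inl t), b, hb => hrm t b hb
  | .inr (.inr (s, t)), b, hb => hrm t _ (hsm s b hb)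

theorem actJ_restrictAct {sm : S → A → A} {rm : A → T → A} (hsm : ∀ s, ∀ b ∈ B, sm s b ∈ B)
    (hrm : ∀ t, ∀ b ∈ B, rm b t ∈ B) :
    actJ (restrictAct sm B hsm) (fun b t => restrictAct (fun t a => rm a t) B hrm t b) =
      restrictAct (actJ sm rm) B (actJ_mem hsm hrm) := by
  ext (s | t | ⟨s, t⟩) b <;> rfl

theorem actJ_reesSm_reesRm (sm : S → A → A) {rm : A → T → A} (hrm : ∀ t, ∀ b ∈ B, rm b t ∈ B) :
    actJ (reesSm sm B) (reesRm rm B) = reesSm (actJ sm rm) B := by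
  ext (s | t | ⟨s, t⟩) (_ | a) : 2
  case inr.inr.some => exact (reesProj_act (act := fun t a => rm a t) hrm t (sm s a)).symm
  all_goals rfl

end GreenJ

theorem minK_iff_subact_and_reesQuotient_general {S T A : Type*}
    (sm : S → A → A) (rm : A → T → A)
    (B : Set A) (hB : IsSubact sm rm B) :
    (MinLAct sm ↔
      (MinLAct (fun (s : S) (b : B) => (⟨sm s b.1, hB.2.1 s b.1 b.2⟩ : B)) ∧
       MinLAct (reesSm sm B))) ∧
    (MinRAct rm ↔
      (MinRAct (fun (b : B) (t : T) => (⟨rm b.1 t, hB.2.2 t b.1 b.2⟩ : B)) ∧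
       MinRAct (reesRm rm B))) ∧
    (MinJAct sm rm ↔
      (MinJAct (fun (s : S) (b : B) => (⟨sm s b.1, hB.2.1 s b.1 b.2⟩ : B))
               (fun (b : B) (t : T) => (⟨rm b.1 t, hB.2.2 t b.1 b.2⟩ : B)) ∧
       MinJAct (reesSm sm B) (reesRm rm B))) := by
  -- `≤_R`, `M_R` and `reesRm` are definitionally their `L`-counterparts for `fun t a => rm a t`.
  refine ⟨minLAct_iff_restrictAct_and_reesSm hB.2.1, minLAct_iff_restrictAct_and_reesSm hB.2.2, ?_⟩
  have hJ := minLAct_iff_restrictAct_and_reesSm (actJ_mem hB.2.1 hB.2.2)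
  rw [← actJ_restrictAct hB.2.1 hB.2.2, ← actJ_reesSm_reesRm sm hB.2.2] at hJ
  simp only [minJAct_iff_minLAct_actJ]
  exact hJ

/-- For `K ∈ {L, R, J}`: a biact `A` satisfies `M_K` if and only if both a
subact `B` (under the restricted actions) and the Rees quotient `A/B` satisfy `M_K`. -/
theorem minK_iff_subact_and_reesQuotient {S T A : Type*} [Semigroup S] [Semigroup T]
    (sm : S → A → A) (rm : A → T → A) (hbi : IsBiact sm rm)
    (B : Set A) (hB : IsSubact sm rm B) :
    (MinLAct sm ↔
      (MinLAct (fun (s : S) (b : B) => (⟨sm s b.1, hB.2.1 s b.1 b.2⟩ : B)) ∧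
       MinLAct (reesSm sm B))) ∧
    (MinRAct rm ↔
      (MinRAct (fun (b : B) (t : T) => (⟨rm b.1 t, hB.2.2 t b.1 b.2⟩ : B)) ∧
       MinRAct (reesRm rm B))) ∧
    (MinJAct sm rm ↔
      (MinJAct (fun (s : S) (b : B) => (⟨sm s b.1, hB.2.1 s b.1 b.2⟩ : B))
               (fun (b : B) (t : T) => (⟨rm b.1 t, hB.2.2 t b.1 b.2⟩ : B)) ∧
       MinJAct (reesSm sm B) (reesRm rm B))) :=
  minK_iff_subact_and_reesQuotient_general sm rm B hB
end

section
/- Let S be a semigroup and T a subsemigroup of S such that only finitely many L-classes of the T-biact _T S_T are contained in S∖T. Then the following are equivalent: (1) S satisfies M_L; (2) T satisfies M_L; (3) the T-biact _T S_T satisfies M_L. -/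
/-! Relative Green's preorders on a semigroup `S`, with multipliers taken from a
subset `W ⊆ S`; taking `W = Set.univ` recovers the usual Green's preorders on `S`,
taking `W = T` for a subsemigroup `T` gives the relative (`T`-biact `_T S_T`)
relations, and restricting the carrier to `T` as well gives the relations of the
semigroup `T` itself. -/

section RelDefs

variable {S : Type*} [Semigroup S]

/-- `a ≤_L b` with multiplier in `W`. -/
def leLW (W : Set S) (a b : S) : Prop := a = b ∨ ∃ t ∈ W, a = t * b

/-- `a ≤_R b` with multiplier in `W`. -/
def leRW (W : Set S) (a b : S) : Prop := a = b ∨ ∃ t ∈ W, a = b * t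

/-- `a ≤_J b` with multipliers in `W`. -/
def leJW (W : Set S) (a b : S) : Prop :=
  a = b ∨ (∃ s ∈ W, a = s * b) ∨ (∃ t ∈ W, a = b * t) ∨ ∃ s ∈ W, ∃ t ∈ W, a = s * b * t

/-- Green's `L`-relation with multipliers in `W`. -/
def eqvLW (W : Set S) (a b : S) : Prop := leLW W a b ∧ leLW W b a

/-- Green's `R`-relation with multipliers in `W`. -/
def eqvRW (W : Set S) (a b : S) : Prop := leRW W a b ∧ leRW W b a

/-- Green's `J`-relation with multipliers in `W`. -/
def eqvJW (W : Set S) (a b : S) : Prop := leJW W a b ∧ leJW W b a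

/-- `M_L` for chains lying in the carrier `C`, with multipliers in `W`. -/
def MinLOn (W C : Set S) : Prop :=
  ∀ f : ℕ → S, (∀ n, f n ∈ C) → (∀ n, leLW W (f (n + 1)) (f n)) →
    ∃ m, ∀ n ≥ m, eqvLW W (f m) (f n)

/-- `M_R` for chains lying in the carrier `C`, with multipliers in `W`. -/
def MinROn (W C : Set S) : Prop :=
  ∀ f : ℕ → S, (∀ n, f n ∈ C) → (∀ n, leRW W (f (n + 1)) (f n)) →
    ∃ m, ∀ n ≥ m, eqvRW W (f m) (f n)

/-- `M_J` for chains lying in the carrier `C`, with multipliers in `W`. -/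
def MinJOn (W C : Set S) : Prop :=
  ∀ f : ℕ → S, (∀ n, f n ∈ C) → (∀ n, leJW W (f (n + 1)) (f n)) →
    ∃ m, ∀ n ≥ m, eqvJW W (f m) (f n)

/-- Left stability for elements of `C`, with multipliers in `W`. -/
def LeftStableOn (W C : Set S) : Prop :=
  ∀ a ∈ C, ∀ s ∈ W, eqvJW W (s * a) a → eqvLW W (s * a) a

/-- Right stability for elements of `C`, with multipliers in `W`. -/
def RightStableOn (W C : Set S) : Prop :=
  ∀ a ∈ C, ∀ t ∈ W, eqvJW W (a * t) a → eqvRW W (a * t) a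

/-- Stability (both left and right). -/
def StableOn (W C : Set S) : Prop := LeftStableOn W C ∧ RightStableOn W C

end RelDefs

namespace MinLAux
variable {S : Type*} [Semigroup S]

lemma leLW_refl (W : Set S) (a : S) : leLW W a a := Or.inl rfl

lemma leLW_trans {W : Set S} (hW : ∀ a ∈ W, ∀ b ∈ W, a * b ∈ W)
    {a b c : S} (h1 : leLW W a b) (h2 : leLW W b c) : leLW W a c := by
  rcases h1 with rfl | ⟨t, ht, rfl⟩
  · exact h2
  · rcases h2 with rfl | ⟨u, hu, rfl⟩
    · exact Or.inr ⟨t, ht, rfl⟩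
    · exact Or.inr ⟨t * u, hW t ht u hu, (mul_assoc t u c).symm⟩

lemma leLW_mono {T : Set S} {a b : S} (h : leLW T a b) : leLW (Set.univ : Set S) a b :=
  h.imp id (fun ⟨t, _, e⟩ => ⟨t, trivial, e⟩)

lemma univ_closed : ∀ a ∈ (Set.univ : Set S), ∀ b ∈ (Set.univ : Set S), a * b ∈ (Set.univ : Set S) :=
  fun _ _ _ _ => trivial

lemma chain_le {W : Set S} (hW : ∀ a ∈ W, ∀ b ∈ W, a * b ∈ W)
    {f : ℕ → S} (hf : ∀ n, leLW W (f (n + 1)) (f n)) :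
    ∀ {k l : ℕ}, k ≤ l → leLW W (f l) (f k) := by
  intro k l h
  induction l, h using Nat.le_induction with
  | base => exact leLW_refl W _
  | succ n hn ih => exact leLW_trans hW (hf n) ih

lemma exists_strict_subseq {W : Set S} (hW : ∀ a ∈ W, ∀ b ∈ W, a * b ∈ W)
    {f : ℕ → S} (hf : ∀ n, leLW W (f (n + 1)) (f n))
    (hfail : ¬ ∃ m, ∀ n ≥ m, eqvLW W (f m) (f n)) :
    ∃ g : ℕ → S, (∀ n, leLW W (g (n + 1)) (g n)) ∧
      (∀ k l, k ≤ l → leLW W (g l) (g k)) ∧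
      (∀ k l, k < l → ¬ leLW W (g k) (g l)) := by
  push_neg at hfail
  have H : ∀ m, ∃ n, m < n ∧ ¬ leLW W (f m) (f n) := by
    intro m
    obtain ⟨n, hn, hne⟩ := hfail m
    have h1 : leLW W (f n) (f m) := chain_le hW hf hn
    have h2 : ¬ leLW W (f m) (f n) := fun h => hne ⟨h, h1⟩
    have hne' : m ≠ n := by rintro rfl; exact h2 (leLW_refl W _)
    exact ⟨n, lt_of_le_of_ne hn hne', h2⟩
  let ν : ℕ → ℕ := fun k => Nat.rec 0 (fun _ p => (H p).choose) k
  have hlt : ∀ k, ν k < ν (k + 1) := fun k => (H (ν k)).choose_spec.1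
  have hstrict : ∀ k, ¬ leLW W (f (ν k)) (f (ν (k + 1))) :=
    fun k => (H (ν k)).choose_spec.2
  have hmono : StrictMono ν := strictMono_nat_of_lt_succ hlt
  refine ⟨fun k => f (ν k), fun k => chain_le hW hf (hlt k).le,
    fun k l h => chain_le hW hf (hmono.monotone h), ?_⟩
  intro k l h hle
  have h2 : leLW W (f (ν l)) (f (ν (k + 1))) := chain_le hW hf (hmono.monotone h)
  exact hstrict k (leLW_trans hW hle h2)

lemma eqv_of_mk_eq {T : Set S} (hT : ∀ a ∈ T, ∀ b ∈ T, a * b ∈ T)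
    {a b : {x : S // x ∉ T}}
    (h : Quot.mk (fun a b : {x : S // x ∉ T} => eqvLW T a.1 b.1) a
       = Quot.mk (fun a b : {x : S // x ∉ T} => eqvLW T a.1 b.1) b) :
    eqvLW T a.1 b.1 := by
  have hequiv : Equivalence (fun a b : {x : S // x ∉ T} => eqvLW T a.1 b.1) := by
    refine ⟨fun x => ⟨leLW_refl T _, leLW_refl T _⟩, fun h => ⟨h.2, h.1⟩, ?_⟩
    intro x y z h1 h2
    exact ⟨leLW_trans hT h1.1 h2.1, leLW_trans hT h2.2 h1.2⟩
  exact (hequiv.eqvGen_iff).mp (Quot.eq.mp h)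


lemma minL_biact_of_minL_T {T : Set S} (hT : ∀ a ∈ T, ∀ b ∈ T, a * b ∈ T)
    (hfin : Finite (Quot fun a b : {x : S // x ∉ T} => eqvLW T a.1 b.1))
    (hmin : MinLOn T T) : MinLOn T (Set.univ : Set S) := by
  intro f _ hf
  by_contra hfail
  obtain ⟨g, hg1, hg2, hg3⟩ := exists_strict_subseq hT hf hfail
  by_cases hinf : {k | g k ∉ T}.Infinite
  · haveI := hinf.to_subtype
    obtain ⟨a, b, hab, heq⟩ := Finite.exists_ne_map_eq_of_infinite
      (fun k : {k | g k ∉ T} =>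
        Quot.mk (fun a b : {x : S // x ∉ T} => eqvLW T a.1 b.1) ⟨g k.1, k.2⟩)
    have heqv := eqv_of_mk_eq hT heq
    have hne : a.1 ≠ b.1 := fun h => hab (Subtype.ext h)
    rcases hne.lt_or_gt with h | h
    · exact hg3 _ _ h heqv.1
    · exact hg3 _ _ h heqv.2
  · rw [Set.not_infinite] at hinf
    obtain ⟨K, hK⟩ : ∃ K : ℕ, ∀ k ≥ K, g k ∈ T := by
      rcases hinf.bddAbove with ⟨B, hB⟩
      exact ⟨B + 1, fun k hk => by_contra fun hmem => absurd (hB hmem) (by omega)⟩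
    obtain ⟨m, hm⟩ := hmin (fun i => g (K + i)) (fun i => hK _ (Nat.le_add_right K i))
      (fun i => hg1 (K + i))
    exact hg3 (K + m) (K + (m + 1)) (by omega) (hm (m + 1) (Nat.le_succ m)).1

lemma minL_biact_of_minL_S {T : Set S} (hT : ∀ a ∈ T, ∀ b ∈ T, a * b ∈ T)
    (hfin : Finite (Quot fun a b : {x : S // x ∉ T} => eqvLW T a.1 b.1))
    (hminS : MinLOn (Set.univ : Set S) Set.univ) : MinLOn T (Set.univ : Set S) := by
  intro f _ hf
  by_contra hfail
  obtain ⟨g, hg1, hg2, hg3⟩ := exists_strict_subseq hT hf hfail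
  obtain ⟨m, hm⟩ := hminS g (fun _ => trivial) (fun n => leLW_mono (hg1 n))
  set h : ℕ → S := fun k => g (m + k) with hh
  have hstrict : ∀ k l, k < l → ¬ leLW T (h k) (h l) := fun k l hkl =>
    hg3 (m + k) (m + l) (by omega)
  have hv : ∀ k, ∃ v : S, h k = v * h (k + 1) := by
    intro k
    have e1 := hm (m + k) (Nat.le_add_right m k)
    have e2 := hm (m + (k + 1)) (Nat.le_add_right m (k + 1))
    have hle : leLW (Set.univ : Set S) (h k) (h (k + 1)) :=
      leLW_trans univ_closed e1.2 e2.1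
    rcases hle with he | ⟨v, _, hv⟩
    · exact absurd (Or.inl he) (hstrict k (k + 1) (Nat.lt_succ_self k))
    · exact ⟨v, hv⟩
  choose v hvs using hv
  let p : ℕ → ℕ → S := fun d =>
    Nat.rec (motive := fun _ => ℕ → S) (fun k => v k) (fun _ ih k => v k * ih (k + 1)) d
  have hp : ∀ d k, h k = p d k * h (k + d + 1) := by
    intro d
    induction d with
    | zero => intro k; exact hvs k
    | succ d ih =>
      intro k
      calc h k = v k * h (k + 1) := hvs k
        _ = v k * (p d (k + 1) * h (k + 1 + d + 1)) := by rw [← ih (k + 1)]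
        _ = (v k * p d (k + 1)) * h (k + 1 + d + 1) := (mul_assoc _ _ _).symm
        _ = p (d + 1) k * h (k + (d + 1) + 1) := by
            rw [show k + 1 + d + 1 = k + (d + 1) + 1 from by omega]
  haveI := Fintype.ofFinite (Quot fun a b : {x : S // x ∉ T} => eqvLW T a.1 b.1)
  set C := Fintype.card (Quot fun a b : {x : S // x ∉ T} => eqvLW T a.1 b.1) with hC
  have hPbase : ∀ k, k ≤ C → h k = p (C - k) k * h (C + 1) := by
    intro k hk
    have := hp (C - k) k
    rwa [show k + (C - k) + 1 = C + 1 from by omega] at this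
  have hPnotT : ∀ k, k ≤ C → p (C - k) k ∉ T := by
    intro k hk hmem
    exact hstrict k (C + 1) (by omega) (Or.inr ⟨_, hmem, hPbase k hk⟩)
  obtain ⟨a, b, hab, heq⟩ := Fintype.exists_ne_map_eq_of_card_lt
    (fun k : Fin (C + 1) =>
      Quot.mk (fun a b : {x : S // x ∉ T} => eqvLW T a.1 b.1)
        ⟨p (C - k.1) k.1, hPnotT k.1 (Nat.lt_succ_iff.mp k.2)⟩)
    (by rw [Fintype.card_fin]; exact lt_add_one _)
  have heqv := eqv_of_mk_eq hT heq
  have key : ∀ x y : Fin (C + 1), x.1 < y.1 →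
      leLW T (p (C - x.1) x.1) (p (C - y.1) y.1) → False := by
    intro x y hxy hle
    have hx := hPbase x.1 (Nat.lt_succ_iff.mp x.2)
    have hy := hPbase y.1 (Nat.lt_succ_iff.mp y.2)
    apply hstrict x.1 y.1 hxy
    rcases hle with hee | ⟨t, ht, hee⟩
    · exact Or.inl (by rw [hx, hee, ← hy])
    · exact Or.inr ⟨t, ht, by rw [hx, hee, mul_assoc, ← hy]⟩
  have hne : a.1 ≠ b.1 := fun h => hab (Fin.ext h)
  rcases hne.lt_or_gt with h | h
  · exact key a b h heqv.1
  · exact key b a h heqv.2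

lemma minL_S_of_minL_biact {T : Set S} (hT : ∀ a ∈ T, ∀ b ∈ T, a * b ∈ T)
    (hfin : Finite (Quot fun a b : {x : S // x ∉ T} => eqvLW T a.1 b.1))
    (hminT : MinLOn T (Set.univ : Set S)) : MinLOn (Set.univ : Set S) Set.univ := by
  intro f _ hf
  by_contra hfail
  obtain ⟨g, hg1, hg2, hg3⟩ := exists_strict_subseq univ_closed hf hfail
  have hσ : ∀ k, ∃ s : S, g (k + 1) = s * g k := by
    intro k
    rcases hg1 k with he | ⟨s, _, hs⟩
    · exact absurd (Or.inl he.symm) (hg3 k (k + 1) (Nat.lt_succ_self k))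
    · exact ⟨s, hs⟩
  choose σ hσs using hσ
  let e : ℕ → ℕ → S := fun k d => Nat.rec (σ k) (fun d ih => σ (k + d + 1) * ih) d
  have he : ∀ k d, g (k + d + 1) = e k d * g k := by
    intro k d
    induction d with
    | zero => exact hσs k
    | succ d ih =>
      calc g (k + (d + 1) + 1) = σ (k + d + 1) * g (k + d + 1) := hσs (k + d + 1)
        _ = σ (k + d + 1) * (e k d * g k) := by rw [ih]
        _ = e k (d + 1) * g k := (mul_assoc _ _ _).symm
  by_cases hcase : ∀ k, {d | e k d ∉ T}.Finite
  · have hB : ∀ k, ∃ B, ∀ d ≥ B, e k d ∈ T := by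
      intro k
      rcases (hcase k).bddAbove with ⟨B, hB⟩
      exact ⟨B + 1, fun d hd => by_contra fun hmem => absurd (hB hmem) (by omega)⟩
    choose B hBs using hB
    let ν : ℕ → ℕ := fun i => Nat.rec 0 (fun _ p => p + B p + 1) i
    have hνlt : ∀ i, ν i < ν (i + 1) := by
      intro i; show ν i < ν i + B (ν i) + 1; omega
    have hchain : ∀ i, leLW T (g (ν (i + 1))) (g (ν i)) := fun i =>
      Or.inr ⟨e (ν i) (B (ν i)), hBs (ν i) _ le_rfl, he (ν i) (B (ν i))⟩
    obtain ⟨m, hm⟩ := hminT (fun i => g (ν i)) (fun _ => trivial) hchain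
    exact hg3 (ν m) (ν (m + 1)) (hνlt m) (leLW_mono (hm (m + 1) (Nat.le_succ m)).1)
  · push_neg at hcase
    obtain ⟨k, hk⟩ := hcase
    have hinf : {d | e k d ∉ T}.Infinite := hk
    haveI := hinf.to_subtype
    obtain ⟨a, b, hab, heq⟩ := Finite.exists_ne_map_eq_of_infinite
      (fun d : {d | e k d ∉ T} =>
        Quot.mk (fun a b : {x : S // x ∉ T} => eqvLW T a.1 b.1) ⟨e k d.1, d.2⟩)
    have heqv := eqv_of_mk_eq hT heq
    have key : ∀ x y : {d | e k d ∉ T}, x.1 < y.1 →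
        leLW T (e k x.1) (e k y.1) → False := by
      intro x y hxy hle
      apply hg3 (k + x.1 + 1) (k + y.1 + 1) (by omega)
      apply leLW_mono
      rcases hle with hee | ⟨t, ht, hee⟩
      · exact Or.inl (by rw [he k x.1, hee, ← he k y.1])
      · exact Or.inr ⟨t, ht, by rw [he k x.1, hee, mul_assoc, ← he k y.1]⟩
    have hne : a.1 ≠ b.1 := fun h => hab (Subtype.ext h)
    rcases hne.lt_or_gt with h | h
    · exact key a b h heqv.1
    · exact key b a h heqv.2

end MinLAux

/-- Let `T` be a subsemigroup of `S` such that only finitely many `L`-classes of the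
`T`-biact `_T S_T` are contained in `S \ T`.  Then the following are equivalent:
(1) `S` satisfies `M_L`; (2) `T` satisfies `M_L`; (3) `_T S_T` satisfies `M_L`. -/
theorem minL_subsemigroup_finitely_many_L_classes {S : Type*} [Semigroup S]
    (T : Set S) (hT0 : T.Nonempty) (hT : ∀ a ∈ T, ∀ b ∈ T, a * b ∈ T)
    (hfin : Finite (Quot fun a b : {x : S // x ∉ T} => eqvLW T a.1 b.1)) :
    (MinLOn (Set.univ : Set S) Set.univ ↔ MinLOn T T) ∧
    (MinLOn T T ↔ MinLOn T (Set.univ : Set S)) := by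
  have h32 : MinLOn T (Set.univ : Set S) → MinLOn T T := fun h f _ hf =>
    h f (fun _ => trivial) hf
  have h23 := MinLAux.minL_biact_of_minL_T hT hfin
  have h13 := MinLAux.minL_biact_of_minL_S hT hfin
  have h31 := MinLAux.minL_S_of_minL_biact hT hfin
  exact ⟨⟨fun h1 => h32 (h13 h1), fun h2 => h31 (h23 h2)⟩, ⟨h23, h32⟩⟩
end

section
/- Let B be a bi-ideal of a semigroup S. If S satisfies M_L, then the semigroup B satisfies M_L. -/
/-- If a semigroup `S` satisfies `M_L`, then so does any bi-ideal `B` of `S`. -/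
theorem minL_biIdeal {S : Type*} [Semigroup S]
    (B : Set S) (hB0 : B.Nonempty)
    (hBB : ∀ a ∈ B, ∀ b ∈ B, a * b ∈ B)
    (hBSB : ∀ a ∈ B, ∀ s : S, ∀ b ∈ B, a * s * b ∈ B)
    (hS : MinLOn (Set.univ : Set S) Set.univ) :
    MinLOn B B := by
  intro f hfB hstep
  classical
  -- the chain is also a chain in S with unrestricted multipliers
  have hstepS : ∀ n, leLW (Set.univ : Set S) (f (n + 1)) (f n) := by
    intro n
    rcases hstep n with h | ⟨c, _, h⟩
    · exact Or.inl h
    · exact Or.inr ⟨c, trivial, h⟩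
  obtain ⟨m, hm⟩ := hS f (fun _ => trivial) hstepS
  -- transitivity of the B-chain downwards
  have hchainB : ∀ M, ∀ n ≥ M, leLW B (f n) (f M) := by
    intro M n hn
    induction n, hn using Nat.le_induction with
    | base => exact Or.inl rfl
    | succ n hn ih =>
      rcases hstep n with h | ⟨c, hc, h⟩
      · rw [h]; exact ih
      · rcases ih with h2 | ⟨u, hu, h2⟩
        · exact Or.inr ⟨c, hc, by rw [h, h2]⟩
        · exact Or.inr ⟨c * u, hBB c hc u hu, by rw [h, h2, mul_assoc]⟩
  -- any two elements beyond m are L-related in S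
  have hLS : ∀ a ≥ m, ∀ b ≥ m, leLW (Set.univ : Set S) (f a) (f b) := by
    intro a ha b hb
    rcases (hm a ha).2 with h1 | ⟨z1, _, h1⟩ <;> rcases (hm b hb).1 with h2 | ⟨z2, _, h2⟩
    · exact Or.inl (h1.trans h2)
    · exact Or.inr ⟨z2, trivial, h1.trans h2⟩
    · exact Or.inr ⟨z1, trivial, by rw [h1, h2]⟩
    · exact Or.inr ⟨z1 * z2, trivial, by rw [h1, h2, mul_assoc]⟩
  by_cases hconst : ∃ N, ∀ n ≥ N, f n = f N
  · obtain ⟨N, hN⟩ := hconst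
    exact ⟨N, fun n hn => ⟨Or.inl (hN n hn).symm, Or.inl (hN n hn)⟩⟩
  · push_neg at hconst
    -- there are changing steps beyond every index
    have hchange : ∀ N, ∃ q ≥ N, f (q + 1) ≠ f q := by
      intro N
      by_contra h
      push_neg at h
      obtain ⟨n, hnN, hne⟩ := hconst N
      apply hne
      clear hne
      induction n, hnN using Nat.le_induction with
      | base => rfl
      | succ n hn ih => rw [h n hn, ih]
    obtain ⟨p, hpm, hp⟩ := hchange m
    rcases hstep p with heq | ⟨c, hc, hcp⟩
    · exact absurd heq hp
    refine ⟨p + 1, fun n hn => ⟨?_, hchainB (p + 1) n hn⟩⟩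
    have hn_m : n ≥ m := le_trans (hpm.trans (Nat.le_succ p)) hn
    -- find the least changing step q ≥ n
    have hex : ∃ k, f (n + k + 1) ≠ f (n + k) := by
      obtain ⟨q0, hq0, hne⟩ := hchange n
      exact ⟨q0 - n, by rwa [Nat.add_sub_cancel' hq0]⟩
    set k := Nat.find hex with hk
    have hkne : f (n + k + 1) ≠ f (n + k) := Nat.find_spec hex
    have hconstk : ∀ j ≤ k, f (n + j) = f n := by
      intro j hj
      induction j with
      | zero => rfl
      | succ j ih =>
        have hj' : j < k := hj
        have hstepj : f (n + j + 1) = f (n + j) :=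
          not_not.mp (Nat.find_min hex hj')
        rw [show n + (j + 1) = n + j + 1 from rfl, hstepj, ih hj'.le]
    have hqn : f (n + k) = f n := hconstk k le_rfl
    rcases hstep (n + k) with heq | ⟨cq, hcq, hq1⟩
    · exact absurd heq hkne
    have hq1' : f (n + k + 1) = cq * f n := by rw [hq1, hqn]
    -- f n = z'' * (cq * f n) for some z''
    have hz : ∃ z'' : S, f n = z'' * (cq * f n) := by
      rcases hLS n hn_m (n + k + 1) (hn_m.trans (Nat.le_add_right n (k + 1))) with h | ⟨z', _, h⟩
      · have hEq : f n = cq * f n := h.trans hq1'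
        refine ⟨cq, ?_⟩
        rw [← hEq]
        exact hEq
      · exact ⟨z', by rw [hq1'] at h; exact h⟩
    obtain ⟨z'', hz⟩ := hz
    have key : f n = (z'' * cq * z'' * cq) * f n := by
      conv_lhs => rw [hz, hz]
      simp [mul_assoc]
    rcases hLS p hpm n hn_m with hpn | ⟨z, _, hpn⟩
    · exact Or.inr ⟨c, hc, by rw [hcp, hpn]⟩
    · refine Or.inr ⟨c * (z * z'') * (cq * z'' * cq),
        hBSB c hc (z * z'') _ (hBSB cq hcq z'' cq hcq), ?_⟩
      conv_lhs => rw [hcp, hpn, key]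
      simp [mul_assoc]
end

section
/- Let B be a bi-ideal of a semigroup S. If S is stable and satisfies M_J, then the semigroup B satisfies M_J. -/
section AuxProof

variable {S : Type*} [Semigroup S]

/-- Multiply on the left by an optional element (`none` = identity). -/
private def mulLX : Option S → S → S
  | none, x => x
  | some p, x => p * x

/-- Multiply on the right by an optional element. -/
private def mulRX : S → Option S → S
  | x, none => x
  | x, some q => x * q

private def optMulX : Option S → Option S → Option S
  | none, q => q
  | some p, none => some p
  | some p, some q => some (p * q)

private def OptMemX (W : Set S) : Option S → Prop
  | none => True
  | some p => p ∈ W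

private lemma mulLX_mulLX (p p' : Option S) (x : S) :
    mulLX p (mulLX p' x) = mulLX (optMulX p p') x := by
  cases p <;> cases p' <;> simp [mulLX, optMulX, mul_assoc]

private lemma mulRX_mulRX (x : S) (q q' : Option S) :
    mulRX (mulRX x q) q' = mulRX x (optMulX q q') := by
  cases q <;> cases q' <;> simp [mulRX, optMulX, mul_assoc]

private lemma mulLX_mulRX (p : Option S) (x : S) (q : Option S) :
    mulRX (mulLX p x) q = mulLX p (mulRX x q) := by
  cases p <;> cases q <;> simp [mulLX, mulRX, mul_assoc]

private lemma optMemX_mul {W : Set S} (hW : ∀ a ∈ W, ∀ b ∈ W, a * b ∈ W)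
    {p q : Option S} (hp : OptMemX W p) (hq : OptMemX W q) :
    OptMemX W (optMulX p q) := by
  cases p <;> cases q <;> simp [OptMemX, optMulX] at * <;> first
    | trivial
    | exact hW _ hp _ hq

private lemma mulLX_memX {B : Set S} (hBB : ∀ a ∈ B, ∀ b ∈ B, a * b ∈ B)
    {p : Option S} {x : S} (hp : OptMemX B p) (hx : x ∈ B) : mulLX p x ∈ B := by
  cases p
  · exact hx
  · exact hBB _ hp _ hx

private lemma mulRX_memX {B : Set S} (hBB : ∀ a ∈ B, ∀ b ∈ B, a * b ∈ B)
    {x : S} {q : Option S} (hx : x ∈ B) (hq : OptMemX B q) : mulRX x q ∈ B := by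
  cases q
  · exact hx
  · exact hBB _ hx _ hq

private lemma leLW_iffX {W : Set S} {a b : S} :
    leLW W a b ↔ ∃ p : Option S, OptMemX W p ∧ a = mulLX p b := by
  constructor
  · rintro (rfl | ⟨t, ht, rfl⟩)
    · exact ⟨none, trivial, rfl⟩
    · exact ⟨some t, ht, rfl⟩
  · rintro ⟨p, hp, rfl⟩
    cases p
    · exact Or.inl rfl
    · exact Or.inr ⟨_, hp, rfl⟩

private lemma leRW_iffX {W : Set S} {a b : S} :
    leRW W a b ↔ ∃ q : Option S, OptMemX W q ∧ a = mulRX b q := by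
  constructor
  · rintro (rfl | ⟨t, ht, rfl⟩)
    · exact ⟨none, trivial, rfl⟩
    · exact ⟨some t, ht, rfl⟩
  · rintro ⟨q, hq, rfl⟩
    cases q
    · exact Or.inl rfl
    · exact Or.inr ⟨_, hq, rfl⟩

private lemma leJW_iffX {W : Set S} {a b : S} :
    leJW W a b ↔ ∃ p q : Option S, OptMemX W p ∧ OptMemX W q ∧ a = mulRX (mulLX p b) q := by
  constructor
  · rintro (rfl | ⟨s, hs, rfl⟩ | ⟨t, ht, rfl⟩ | ⟨s, hs, t, ht, rfl⟩)
    · exact ⟨none, none, trivial, trivial, rfl⟩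
    · exact ⟨some s, none, hs, trivial, rfl⟩
    · exact ⟨none, some t, trivial, ht, rfl⟩
    · exact ⟨some s, some t, hs, ht, rfl⟩
  · rintro ⟨p, q, hp, hq, rfl⟩
    cases p <;> cases q
    · exact Or.inl rfl
    · exact Or.inr (Or.inr (Or.inl ⟨_, hq, rfl⟩))
    · exact Or.inr (Or.inl ⟨_, hp, rfl⟩)
    · exact Or.inr (Or.inr (Or.inr ⟨_, hp, _, hq, rfl⟩))

private lemma leLW_transX {W : Set S} (hW : ∀ a ∈ W, ∀ b ∈ W, a * b ∈ W)
    {a b c : S} (h1 : leLW W a b) (h2 : leLW W b c) : leLW W a c := by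
  obtain ⟨p, hp, rfl⟩ := leLW_iffX.1 h1
  obtain ⟨p', hp', rfl⟩ := leLW_iffX.1 h2
  exact leLW_iffX.2 ⟨optMulX p p', optMemX_mul hW hp hp', (mulLX_mulLX p p' c)⟩

private lemma leRW_transX {W : Set S} (hW : ∀ a ∈ W, ∀ b ∈ W, a * b ∈ W)
    {a b c : S} (h1 : leRW W a b) (h2 : leRW W b c) : leRW W a c := by
  obtain ⟨q, hq, rfl⟩ := leRW_iffX.1 h1
  obtain ⟨q', hq', rfl⟩ := leRW_iffX.1 h2
  exact leRW_iffX.2 ⟨optMulX q' q, optMemX_mul hW hq' hq, (mulRX_mulRX c q' q)⟩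

private lemma leJW_transX {W : Set S} (hW : ∀ a ∈ W, ∀ b ∈ W, a * b ∈ W)
    {a b c : S} (h1 : leJW W a b) (h2 : leJW W b c) : leJW W a c := by
  obtain ⟨p, q, hp, hq, rfl⟩ := leJW_iffX.1 h1
  obtain ⟨p', q', hp', hq', rfl⟩ := leJW_iffX.1 h2
  refine leJW_iffX.2 ⟨optMulX p p', optMulX q' q, optMemX_mul hW hp hp',
    optMemX_mul hW hq' hq, ?_⟩
  rw [mulLX_mulRX p _ q, mulRX_mulRX, mulLX_mulRX p', mulLX_mulLX, ← mulLX_mulRX]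

private lemma univ_mul_closed : ∀ a ∈ (Set.univ : Set S), ∀ b ∈ (Set.univ : Set S),
    a * b ∈ (Set.univ : Set S) := fun _ _ _ _ => Set.mem_univ _

private lemma eqvLW_reflX {W : Set S} (a : S) : eqvLW W a a := ⟨Or.inl rfl, Or.inl rfl⟩

private lemma eqvLW_transX {W : Set S} (hW : ∀ a ∈ W, ∀ b ∈ W, a * b ∈ W)
    {a b c : S} (h1 : eqvLW W a b) (h2 : eqvLW W b c) : eqvLW W a c :=
  ⟨leLW_transX hW h1.1 h2.1, leLW_transX hW h2.2 h1.2⟩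

private lemma eqvRW_reflX {W : Set S} (a : S) : eqvRW W a a := ⟨Or.inl rfl, Or.inl rfl⟩

private lemma eqvRW_transX {W : Set S} (hW : ∀ a ∈ W, ∀ b ∈ W, a * b ∈ W)
    {a b c : S} (h1 : eqvRW W a b) (h2 : eqvRW W b c) : eqvRW W a c :=
  ⟨leRW_transX hW h1.1 h2.1, leRW_transX hW h2.2 h1.2⟩

private lemma eqvJW_symmX {W : Set S} {a b : S} (h : eqvJW W a b) : eqvJW W b a :=
  ⟨h.2, h.1⟩

private lemma eqvJW_transX {W : Set S} (hW : ∀ a ∈ W, ∀ b ∈ W, a * b ∈ W)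
    {a b c : S} (h1 : eqvJW W a b) (h2 : eqvJW W b c) : eqvJW W a c :=
  ⟨leJW_transX hW h1.1 h2.1, leJW_transX hW h2.2 h1.2⟩

end AuxProof

section KernProof

variable {S : Type*} [Semigroup S]

private lemma chainL_down {W : Set S} (hW : ∀ a ∈ W, ∀ b ∈ W, a * b ∈ W)
    {c : ℕ → S} (hstep : ∀ k, leLW W (c (k + 1)) (c k)) :
    ∀ i j, i ≤ j → leLW W (c j) (c i) := by
  intro i j hij
  induction j, hij using Nat.le_induction with
  | base => exact Or.inl rfl
  | succ j hij ih => exact leLW_transX hW (hstep j) ih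

private lemma chainR_down {W : Set S} (hW : ∀ a ∈ W, ∀ b ∈ W, a * b ∈ W)
    {c : ℕ → S} (hstep : ∀ k, leRW W (c (k + 1)) (c k)) :
    ∀ i j, i ≤ j → leRW W (c j) (c i) := by
  intro i j hij
  induction j, hij using Nat.le_induction with
  | base => exact Or.inl rfl
  | succ j hij ih => exact leRW_transX hW (hstep j) ih

private lemma chainJ_down {W : Set S} (hW : ∀ a ∈ W, ∀ b ∈ W, a * b ∈ W)
    {c : ℕ → S} (hstep : ∀ k, leJW W (c (k + 1)) (c k)) :
    ∀ i j, i ≤ j → leJW W (c j) (c i) := by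
  intro i j hij
  induction j, hij using Nat.le_induction with
  | base => exact Or.inl rfl
  | succ j hij ih => exact leJW_transX hW (hstep j) ih

/-- Core lemma (left version): a pure-left `B`-chain stabilises w.r.t. relative `L`. -/
private lemma kernelL (B : Set S)
    (hBB : ∀ a ∈ B, ∀ b ∈ B, a * b ∈ B)
    (hBSB : ∀ a ∈ B, ∀ s : S, ∀ b ∈ B, a * s * b ∈ B)
    (hlstab : LeftStableOn (Set.univ : Set S) Set.univ)
    (hS : MinJOn (Set.univ : Set S) Set.univ)
    (c : ℕ → S) (hmem : ∀ k, c k ∈ B)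
    (hstep : ∀ k, c (k + 1) = c k ∨ ∃ σ, σ ∈ B ∧ c (k + 1) = σ * c k) :
    ∃ m, ∀ n ≥ m, eqvLW B (c m) (c n) := by
  have hchainJ : ∀ k, leJW (Set.univ : Set S) (c (k + 1)) (c k) := by
    intro k
    rcases hstep k with h | ⟨σ, _, h⟩
    · exact Or.inl h
    · exact Or.inr (Or.inl ⟨σ, Set.mem_univ _, h⟩)
  obtain ⟨K, hK⟩ := hS c (fun _ => Set.mem_univ _) hchainJ
  have hJpair : ∀ i, K ≤ i → ∀ j, K ≤ j → eqvJW (Set.univ : Set S) (c i) (c j) := by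
    intro i hi j hj
    exact eqvJW_transX univ_mul_closed (eqvJW_symmX (hK i hi)) (hK j hj)
  have hLcons : ∀ j, K ≤ j → eqvLW (Set.univ : Set S) (c (j + 1)) (c j) := by
    intro j hj
    rcases hstep j with h | ⟨σ, _, h⟩
    · rw [h]; exact eqvLW_reflX _
    · have hJ : eqvJW (Set.univ : Set S) (σ * c j) (c j) := by
        rw [← h]; exact hJpair (j + 1) (le_trans hj (Nat.le_succ j)) j hj
      have := hlstab (c j) (Set.mem_univ _) σ (Set.mem_univ _) hJ
      rw [h]; exact this
  have hLup : ∀ i, K ≤ i → ∀ j, i ≤ j → eqvLW (Set.univ : Set S) (c j) (c i) := by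
    intro i hi j hij
    induction j, hij using Nat.le_induction with
    | base => exact eqvLW_reflX _
    | succ j hij ih => exact eqvLW_transX univ_mul_closed (hLcons j (le_trans hi hij)) ih
  have hLpair : ∀ i, K ≤ i → ∀ j, K ≤ j → leLW (Set.univ : Set S) (c i) (c j) := by
    intro i hi j hj
    rcases le_total i j with h | h
    · exact (hLup i hi j h).2
    · exact (hLup j hj i h).1
  by_cases hinf : ∀ N : ℕ, ∃ k, max N K ≤ k ∧ ∃ σ, σ ∈ B ∧ c (k + 1) = σ * c k
  · obtain ⟨k₀, hk₀, σ₀, hσ₀B, hσ₀⟩ := hinf 0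
    have hk₀K : K ≤ k₀ := le_trans (le_max_right 0 K) hk₀
    have hdownB : ∀ i j, i ≤ j → leLW B (c j) (c i) := by
      refine chainL_down hBB ?_
      intro k
      rcases hstep k with h | ⟨σ, hσ, h⟩
      · exact Or.inl h
      · exact Or.inr ⟨σ, hσ, h⟩
    have hSle : ∀ k, k₀ + 1 ≤ k → ∃ Tt, Tt ∈ B ∧ c k = Tt * c k₀ := by
      intro k hk
      induction k, hk using Nat.le_induction with
      | base => exact ⟨σ₀, hσ₀B, hσ₀⟩
      | succ k hk ih =>
        obtain ⟨T, hT, he⟩ := ih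
        rcases hstep k with h | ⟨σ, hσ, h⟩
        · exact ⟨T, hT, by rw [h, he]⟩
        · exact ⟨σ * T, hBB σ hσ T hT, by rw [h, he, mul_assoc]⟩
    have hcons : ∀ k, k₀ + 1 ≤ k → leLW B (c k) (c (k + 1)) := by
      intro k hk
      obtain ⟨T, hTB, hT⟩ := hSle k hk
      obtain ⟨j, hj, σj, hσjB, hσj⟩ := hinf (k + 1)
      have hjk : k + 1 ≤ j := le_trans (le_max_left _ _) hj
      have hjK : K ≤ j := le_trans (le_max_right _ _) hj
      have hdn : leLW B (c j) (c (k + 1)) := hdownB (k + 1) j hjk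
      have hM : leLW (Set.univ : Set S) (c k₀) (c (j + 1)) :=
        hLpair k₀ hk₀K (j + 1) (le_trans hjK (Nat.le_succ j))
      obtain ⟨β, hβB, hβ⟩ : ∃ β, β ∈ B ∧ c (j + 1) = β * c (k + 1) := by
        rcases hdn with h | ⟨T', hT'B, h⟩
        · exact ⟨σj, hσjB, by rw [hσj, h]⟩
        · exact ⟨σj * T', hBB σj hσjB T' hT'B, by rw [hσj, h, mul_assoc]⟩
      rcases hM with h | ⟨M, _, h⟩
      · refine Or.inr ⟨T * β, hBB T hTB β hβB, ?_⟩
        rw [hT, h, hβ, mul_assoc]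
      · refine Or.inr ⟨T * M * β, hBSB T hTB M β hβB, ?_⟩
        rw [hT, h, hβ]
        simp only [mul_assoc]
    have hup : ∀ n, k₀ + 1 ≤ n → leLW B (c (k₀ + 1)) (c n) := by
      intro n hn
      induction n, hn using Nat.le_induction with
      | base => exact Or.inl rfl
      | succ n hn ih => exact leLW_transX hBB ih (hcons n hn)
    exact ⟨k₀ + 1, fun n hn => ⟨hup n hn, hdownB (k₀ + 1) n hn⟩⟩
  · push_neg at hinf
    obtain ⟨N, hN⟩ := hinf
    refine ⟨max N K, fun n hn => ?_⟩
    have hconst : ∀ n, max N K ≤ n → c n = c (max N K) := by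
      intro n hn
      induction n, hn using Nat.le_induction with
      | base => rfl
      | succ n hn ih =>
        rcases hstep n with h | ⟨σ, hσ, h⟩
        · rw [h, ih]
        · exact absurd h (hN n hn σ hσ)
    rw [hconst n hn]
    exact eqvLW_reflX _

/-- Core lemma (right version). -/
private lemma kernelR (B : Set S)
    (hBB : ∀ a ∈ B, ∀ b ∈ B, a * b ∈ B)
    (hBSB : ∀ a ∈ B, ∀ s : S, ∀ b ∈ B, a * s * b ∈ B)
    (hrstab : RightStableOn (Set.univ : Set S) Set.univ)
    (hS : MinJOn (Set.univ : Set S) Set.univ)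
    (c : ℕ → S) (hmem : ∀ k, c k ∈ B)
    (hstep : ∀ k, c (k + 1) = c k ∨ ∃ τ, τ ∈ B ∧ c (k + 1) = c k * τ) :
    ∃ m, ∀ n ≥ m, eqvRW B (c m) (c n) := by
  have hchainJ : ∀ k, leJW (Set.univ : Set S) (c (k + 1)) (c k) := by
    intro k
    rcases hstep k with h | ⟨τ, _, h⟩
    · exact Or.inl h
    · exact Or.inr (Or.inr (Or.inl ⟨τ, Set.mem_univ _, h⟩))
  obtain ⟨K, hK⟩ := hS c (fun _ => Set.mem_univ _) hchainJ
  have hJpair : ∀ i, K ≤ i → ∀ j, K ≤ j → eqvJW (Set.univ : Set S) (c i) (c j) := by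
    intro i hi j hj
    exact eqvJW_transX univ_mul_closed (eqvJW_symmX (hK i hi)) (hK j hj)
  have hRcons : ∀ j, K ≤ j → eqvRW (Set.univ : Set S) (c (j + 1)) (c j) := by
    intro j hj
    rcases hstep j with h | ⟨τ, _, h⟩
    · rw [h]; exact eqvRW_reflX _
    · have hJ : eqvJW (Set.univ : Set S) (c j * τ) (c j) := by
        rw [← h]; exact hJpair (j + 1) (le_trans hj (Nat.le_succ j)) j hj
      have := hrstab (c j) (Set.mem_univ _) τ (Set.mem_univ _) hJ
      rw [h]; exact this
  have hRup : ∀ i, K ≤ i → ∀ j, i ≤ j → eqvRW (Set.univ : Set S) (c j) (c i) := by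
    intro i hi j hij
    induction j, hij using Nat.le_induction with
    | base => exact eqvRW_reflX _
    | succ j hij ih => exact eqvRW_transX univ_mul_closed (hRcons j (le_trans hi hij)) ih
  have hRpair : ∀ i, K ≤ i → ∀ j, K ≤ j → leRW (Set.univ : Set S) (c i) (c j) := by
    intro i hi j hj
    rcases le_total i j with h | h
    · exact (hRup i hi j h).2
    · exact (hRup j hj i h).1
  by_cases hinf : ∀ N : ℕ, ∃ k, max N K ≤ k ∧ ∃ τ, τ ∈ B ∧ c (k + 1) = c k * τ
  · obtain ⟨k₀, hk₀, τ₀, hτ₀B, hτ₀⟩ := hinf 0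
    have hk₀K : K ≤ k₀ := le_trans (le_max_right 0 K) hk₀
    have hdownB : ∀ i j, i ≤ j → leRW B (c j) (c i) := by
      refine chainR_down hBB ?_
      intro k
      rcases hstep k with h | ⟨τ, hτ, h⟩
      · exact Or.inl h
      · exact Or.inr ⟨τ, hτ, h⟩
    have hSle : ∀ k, k₀ + 1 ≤ k → ∃ Tt, Tt ∈ B ∧ c k = c k₀ * Tt := by
      intro k hk
      induction k, hk using Nat.le_induction with
      | base => exact ⟨τ₀, hτ₀B, hτ₀⟩
      | succ k hk ih =>
        obtain ⟨T, hT, he⟩ := ih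
        rcases hstep k with h | ⟨τ, hτ, h⟩
        · exact ⟨T, hT, by rw [h, he]⟩
        · exact ⟨T * τ, hBB T hT τ hτ, by rw [h, he, mul_assoc]⟩
    have hcons : ∀ k, k₀ + 1 ≤ k → leRW B (c k) (c (k + 1)) := by
      intro k hk
      obtain ⟨T, hTB, hT⟩ := hSle k hk
      obtain ⟨j, hj, τj, hτjB, hτj⟩ := hinf (k + 1)
      have hjk : k + 1 ≤ j := le_trans (le_max_left _ _) hj
      have hjK : K ≤ j := le_trans (le_max_right _ _) hj
      have hdn : leRW B (c j) (c (k + 1)) := hdownB (k + 1) j hjk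
      have hM : leRW (Set.univ : Set S) (c k₀) (c (j + 1)) :=
        hRpair k₀ hk₀K (j + 1) (le_trans hjK (Nat.le_succ j))
      obtain ⟨β, hβB, hβ⟩ : ∃ β, β ∈ B ∧ c (j + 1) = c (k + 1) * β := by
        rcases hdn with h | ⟨T', hT'B, h⟩
        · exact ⟨τj, hτjB, by rw [hτj, h]⟩
        · exact ⟨T' * τj, hBB T' hT'B τj hτjB, by rw [hτj, h, mul_assoc]⟩
      rcases hM with h | ⟨M, _, h⟩
      · refine Or.inr ⟨β * T, hBB β hβB T hTB, ?_⟩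
        rw [hT, h, hβ, mul_assoc]
      · refine Or.inr ⟨β * M * T, hBSB β hβB M T hTB, ?_⟩
        rw [hT, h, hβ]
        simp only [mul_assoc]
    have hup : ∀ n, k₀ + 1 ≤ n → leRW B (c (k₀ + 1)) (c n) := by
      intro n hn
      induction n, hn using Nat.le_induction with
      | base => exact Or.inl rfl
      | succ n hn ih => exact leRW_transX hBB ih (hcons n hn)
    exact ⟨k₀ + 1, fun n hn => ⟨hup n hn, hdownB (k₀ + 1) n hn⟩⟩
  · push_neg at hinf
    obtain ⟨N, hN⟩ := hinf
    refine ⟨max N K, fun n hn => ?_⟩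
    have hconst : ∀ n, max N K ≤ n → c n = c (max N K) := by
      intro n hn
      induction n, hn using Nat.le_induction with
      | base => rfl
      | succ n hn ih =>
        rcases hstep n with h | ⟨τ, hτ, h⟩
        · rw [h, ih]
        · exact absurd h (hN n hn τ hτ)
    rw [hconst n hn]
    exact eqvRW_reflX _

end KernProof

section MainProof

variable {S : Type*} [Semigroup S]

private def iterLX (g : ℕ → Option S) (x : S) : ℕ → S :=
  fun k => Nat.rec x (fun n ih => mulLX (g n) ih) k

private def iterRX (g : ℕ → Option S) (x : S) : ℕ → S :=
  fun k => Nat.rec x (fun n ih => mulRX ih (g n)) k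

private def prodLX (g : ℕ → Option S) : ℕ → Option S :=
  fun k => Nat.rec none (fun n ih => optMulX (g n) ih) k

private def prodRX (g : ℕ → Option S) : ℕ → Option S :=
  fun k => Nat.rec none (fun n ih => optMulX ih (g n)) k

end MainProof


/-- If a semigroup `S` is stable and satisfies `M_J`, then any bi-ideal `B` of `S`
satisfies `M_J`. -/
theorem minJ_biIdeal_of_stable {S : Type*} [Semigroup S]
    (B : Set S) (hB0 : B.Nonempty)
    (hBB : ∀ a ∈ B, ∀ b ∈ B, a * b ∈ B)
    (hBSB : ∀ a ∈ B, ∀ s : S, ∀ b ∈ B, a * s * b ∈ B)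
    (hstab : StableOn (Set.univ : Set S) Set.univ)
    (hS : MinJOn (Set.univ : Set S) Set.univ) :
    MinJOn B B := by
  intro f hfB hchain
  classical
  have hw : ∀ k, ∃ p q : Option S, OptMemX B p ∧ OptMemX B q ∧
      f (k + 1) = mulRX (mulLX p (f k)) q := by
    intro k
    obtain ⟨p, q, hp, hq, he⟩ := leJW_iffX.1 (hchain k)
    exact ⟨p, q, hp, hq, he⟩
  choose P Q hP hQ hf using hw
  set c : ℕ → S := iterLX P (f 0) with hc
  set d : ℕ → S := iterRX Q (f 0) with hd
  have hcsucc : ∀ k, c (k + 1) = mulLX (P k) (c k) := fun k => rfl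
  have hdsucc : ∀ k, d (k + 1) = mulRX (d k) (Q k) := fun k => rfl
  have hc0 : c 0 = f 0 := rfl
  have hd0 : d 0 = f 0 := rfl
  have hcB : ∀ k, c k ∈ B := by
    intro k
    induction k with
    | zero => exact hfB 0
    | succ k ih => rw [hcsucc]; exact mulLX_memX hBB (hP k) ih
  have hdB : ∀ k, d k ∈ B := by
    intro k
    induction k with
    | zero => exact hfB 0
    | succ k ih => rw [hdsucc]; exact mulRX_memX hBB ih (hQ k)
  have hcstep : ∀ k, c (k + 1) = c k ∨ ∃ σ, σ ∈ B ∧ c (k + 1) = σ * c k := by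
    intro k
    have h := hcsucc k
    have hp := hP k
    cases hPk : P k with
    | none => left; rw [h, hPk]; rfl
    | some p =>
      right
      refine ⟨p, ?_, by rw [h, hPk]; rfl⟩
      rw [hPk] at hp; exact hp
  have hdstep : ∀ k, d (k + 1) = d k ∨ ∃ τ, τ ∈ B ∧ d (k + 1) = d k * τ := by
    intro k
    have h := hdsucc k
    have hq := hQ k
    cases hQk : Q k with
    | none => left; rw [h, hQk]; rfl
    | some q =>
      right
      refine ⟨q, ?_, by rw [h, hQk]; rfl⟩
      rw [hQk] at hq; exact hq
  obtain ⟨m₁, hm₁⟩ := kernelL B hBB hBSB hstab.1 hS c hcB hcstep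
  obtain ⟨m₂, hm₂⟩ := kernelR B hBB hBSB hstab.2 hS d hdB hdstep
  set m := max m₁ m₂ with hm
  -- invariants relating f, c, d
  have hPb : ∀ k, c k = mulLX (prodLX P k) (f 0) := by
    intro k
    induction k with
    | zero => rfl
    | succ k ih =>
      rw [hcsucc, ih]
      exact mulLX_mulLX (P k) (prodLX P k) (f 0)
  have hQb : ∀ k, d k = mulRX (f 0) (prodRX Q k) := by
    intro k
    induction k with
    | zero => rfl
    | succ k ih =>
      rw [hdsucc, ih]
      exact mulRX_mulRX (f 0) (prodRX Q k) (Q k)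
  have hfk : ∀ k, f k = mulRX (mulLX (prodLX P k) (f 0)) (prodRX Q k) := by
    intro k
    induction k with
    | zero => rfl
    | succ k ih =>
      rw [hf k, ih]
      show mulRX (mulLX (P k) (mulRX (mulLX (prodLX P k) (f 0)) (prodRX Q k))) (Q k) = _
      rw [← mulLX_mulRX (P k), mulRX_mulRX, mulLX_mulLX]
      rfl
  have hcLE : ∀ k, m ≤ k → leLW B (c k) (c (k + 1)) := by
    intro k hk
    have h1 : leLW B (c k) (c m₁) :=
      (hm₁ k (le_trans (le_max_left _ _) hk)).2
    have h2 : leLW B (c m₁) (c (k + 1)) :=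
      (hm₁ (k + 1) (le_trans (le_trans (le_max_left _ _) hk) (Nat.le_succ k))).1
    exact leLW_transX hBB h1 h2
  have hdLE : ∀ k, m ≤ k → leRW B (d k) (d (k + 1)) := by
    intro k hk
    have h1 : leRW B (d k) (d m₂) :=
      (hm₂ k (le_trans (le_max_right _ _) hk)).2
    have h2 : leRW B (d m₂) (d (k + 1)) :=
      (hm₂ (k + 1) (le_trans (le_trans (le_max_right _ _) hk) (Nat.le_succ k))).1
    exact leRW_transX hBB h1 h2
  have key : ∀ k, m ≤ k → leJW B (f k) (f (k + 1)) := by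
    intro k hk
    obtain ⟨p, hpB, hpe⟩ := leLW_iffX.1 (hcLE k hk)
    obtain ⟨q, hqB, hqe⟩ := leRW_iffX.1 (hdLE k hk)
    refine leJW_iffX.2 ⟨p, q, hpB, hqB, ?_⟩
    calc f k = mulRX (c k) (prodRX Q k) := by rw [hfk k, hPb k]
      _ = mulRX (mulLX p (c (k + 1))) (prodRX Q k) := by rw [← hpe]
      _ = mulLX p (mulRX (c (k + 1)) (prodRX Q k)) := mulLX_mulRX _ _ _
      _ = mulLX p (mulRX (mulLX (prodLX P (k + 1)) (f 0)) (prodRX Q k)) := by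
            rw [hPb (k + 1)]
      _ = mulLX p (mulLX (prodLX P (k + 1)) (mulRX (f 0) (prodRX Q k))) := by
            rw [mulLX_mulRX]
      _ = mulLX p (mulLX (prodLX P (k + 1)) (d k)) := by rw [← hQb k]
      _ = mulLX p (mulLX (prodLX P (k + 1)) (mulRX (d (k + 1)) q)) := by rw [← hqe]
      _ = mulLX p (mulRX (mulLX (prodLX P (k + 1)) (d (k + 1))) q) := by
            rw [mulLX_mulRX]
      _ = mulLX p (mulRX (mulRX (mulLX (prodLX P (k + 1)) (f 0)) (prodRX Q (k + 1))) q) := by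
            rw [hQb (k + 1)]; simp only [mulLX_mulRX]
      _ = mulLX p (mulRX (f (k + 1)) q) := by rw [← hfk (k + 1)]
      _ = mulRX (mulLX p (f (k + 1))) q := (mulLX_mulRX _ _ _).symm
  have hdownJ : ∀ i j, i ≤ j → leJW B (f j) (f i) := chainJ_down hBB hchain
  have hupJ : ∀ n, m ≤ n → leJW B (f m) (f n) := by
    intro n hn
    induction n, hn using Nat.le_induction with
    | base => exact Or.inl rfl
    | succ n hn ih => exact leJW_transX hBB ih (key n hn)
  exact ⟨m, fun n hn => ⟨hupJ n hn, hdownJ m n hn⟩⟩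
end
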